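/- arXiv:2106.06502 — 7 statements merged into one kernel-verified Lean document; each statement's English description precedes it below -/
import Mathlib

section
/- For all r in [0,1), all x in [0,1), all p in (0,1], and all positive integers m, the quantity Q(x) := 1 - ((r^m + x)/(1 + x·r^m))^p - p·((1 - r^m)/(1 + r^m))·(1 - x) is nonnegative. -/
/-!
Put `t = r ^ m ∈ [0, 1]` and `y = (t + x) / (1 + x t)`. Bernoulli's inequality for the concave
power `y ^ p` gives `1 - y ^ p ≥ p (1 - y)`, and `1 - y = (1 - t)(1 - x) / (1 + x t)` is at least
`(1 - t)(1 - x) / (1 + t)` because `x t ≤ t`.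
-/

lemma mul_one_sub_le_one_sub_rpow {y p : ℝ} (hy : 0 ≤ y) (hp0 : 0 ≤ p) (hp1 : p ≤ 1) :
    p * (1 - y) ≤ 1 - y ^ p := by
  have h := rpow_one_add_le_one_add_mul_self (s := y - 1) (by linarith) hp0 hp1
  rw [add_sub_cancel] at h
  linarith

lemma one_sub_div_one_add_mul (t x : ℝ) (h : 1 + x * t ≠ 0) :
    1 - (t + x) / (1 + x * t) = (1 - t) * (1 - x) / (1 + x * t) := by
  rw [eq_div_iff h, sub_mul, div_mul_cancel₀ _ h]
  ring

lemma div_one_add_mul_one_sub_le_one_sub_div {t x : ℝ} (ht0 : 0 ≤ t) (ht1 : t ≤ 1)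
    (hx0 : 0 ≤ x) (hx1 : x ≤ 1) :
    (1 - t) / (1 + t) * (1 - x) ≤ 1 - (t + x) / (1 + x * t) := by
  have hd : 0 < 1 + x * t := by positivity
  rw [one_sub_div_one_add_mul t x hd.ne', div_mul_eq_mul_div]
  exact div_le_div_of_nonneg_left (mul_nonneg (by linarith) (by linarith)) hd
    (by nlinarith)

lemma mul_div_one_add_mul_one_sub_le_one_sub_rpow {t x p : ℝ} (ht0 : 0 ≤ t) (ht1 : t ≤ 1)
    (hx0 : 0 ≤ x) (hx1 : x ≤ 1) (hp0 : 0 ≤ p) (hp1 : p ≤ 1) :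
    p * ((1 - t) / (1 + t)) * (1 - x) ≤ 1 - ((t + x) / (1 + x * t)) ^ p := by
  have hy : 0 ≤ (t + x) / (1 + x * t) := by positivity
  calc p * ((1 - t) / (1 + t)) * (1 - x)
      = p * ((1 - t) / (1 + t) * (1 - x)) := mul_assoc _ _ _
    _ ≤ p * (1 - (t + x) / (1 + x * t)) :=
        mul_le_mul_of_nonneg_left (div_one_add_mul_one_sub_le_one_sub_div ht0 ht1 hx0 hx1) hp0
    _ ≤ 1 - ((t + x) / (1 + x * t)) ^ p := mul_one_sub_le_one_sub_rpow hy hp0 hp1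

theorem bohr_rogosinski_lemma_Q_nonneg_general
    (r x p : ℝ) (m : ℕ)
    (hr : r ∈ Set.Ico (0:ℝ) 1) (hx : x ∈ Set.Ico (0:ℝ) 1)
    (hp : p ∈ Set.Ioc (0:ℝ) 1) :
    0 ≤ 1 - ((r ^ m + x) / (1 + x * r ^ m)) ^ p
        - p * ((1 - r ^ m) / (1 + r ^ m)) * (1 - x) := by
  have h := mul_div_one_add_mul_one_sub_le_one_sub_rpow (pow_nonneg hr.1 m)
    (pow_le_one₀ hr.1 hr.2.le) hx.1 hx.2.le hp.1.le hp.2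
  linarith

theorem bohr_rogosinski_lemma_Q_nonneg
    (r x p : ℝ) (m : ℕ)
    (hr : r ∈ Set.Ico (0:ℝ) 1) (hx : x ∈ Set.Ico (0:ℝ) 1)
    (hp : p ∈ Set.Ioc (0:ℝ) 1) (hm : 0 < m) :
    0 ≤ 1 - ((r ^ m + x) / (1 + x * r ^ m)) ^ p
        - p * ((1 - r ^ m) / (1 + r ^ m)) * (1 - x) :=
  bohr_rogosinski_lemma_Q_nonneg_general r x p m hr hx hp
end

section
/- The function x ↦ 1 - ((r^m + x)/(1 + x·r^m))^p - p·((1 - r^m)/(1 + r^m))·(1 - x) is monotonically decreasing on [0,1) for every fixed r in [0,1), p in (0,1], and positive integer m. -/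
/-!
Write `φ_a(x) = (a + x) / (1 + a x)` with `a = r ^ m ∈ [0, 1]`. On `[0, 1]` the map `φ_a` takes values
in `[0, 1]` and has derivative `(1 - a²) / (1 + a x)² ≥ (1 - a) / (1 + a)`, while `t ↦ t ^ (p - 1)`
is at least `1` on `(0, 1]` because `p ≤ 1`. Hence the derivative of `x ↦ φ_a(x) ^ p` dominates `p (1 - a) / (1 + a)`,
the slope of the linear term, and the function of the theorem has nonpositive derivative.
-/

open Set

lemma hasDerivAt_add_div_one_add_mul (a x : ℝ) (hx : 1 + x * a ≠ 0) :
    HasDerivAt (fun y : ℝ => (a + y) / (1 + y * a)) ((1 - a ^ 2) / (1 + x * a) ^ 2) x := by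
  have hdenom : HasDerivAt (fun y : ℝ => 1 + y * a) a x := by
    simpa using ((hasDerivAt_id x).mul_const a).const_add 1
  exact (((hasDerivAt_id x).const_add a).div hdenom hx).congr_deriv (by simp only [id]; ring)

lemma add_div_one_add_mul_le_one {a x : ℝ} (ha : a ≤ 1) (hx : x ≤ 1) (hd : 0 < 1 + x * a) :
    (a + x) / (1 + x * a) ≤ 1 := by
  rw [div_le_one hd]
  nlinarith [mul_nonneg (sub_nonneg.2 ha) (sub_nonneg.2 hx)]

lemma one_sub_div_one_add_le {a x : ℝ} (ha0 : 0 ≤ a) (ha1 : a ≤ 1) (hx0 : 0 ≤ x) (hx1 : x ≤ 1) :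
    (1 - a) / (1 + a) ≤ (1 - a ^ 2) / (1 + x * a) ^ 2 :=
  calc (1 - a) / (1 + a) = (1 - a ^ 2) / (1 + a) ^ 2 := by
        field_simp
        ring
    _ ≤ (1 - a ^ 2) / (1 + x * a) ^ 2 := by
        gcongr
        · nlinarith
        · nlinarith

theorem antitoneOn_one_sub_add_div_one_add_mul_rpow {a p : ℝ} (ha0 : 0 ≤ a) (ha1 : a ≤ 1)
    (hp0 : 0 ≤ p) (hp1 : p ≤ 1) :
    AntitoneOn (fun x : ℝ =>
      1 - ((a + x) / (1 + x * a)) ^ p - p * ((1 - a) / (1 + a)) * (1 - x)) (Icc 0 1) := by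
  have hden : ∀ x ∈ Icc (0 : ℝ) 1, 0 < 1 + x * a := fun x hx => by nlinarith [hx.1]
  refine antitoneOn_of_hasDerivWithinAt_nonpos (convex_Icc 0 1)
    (f' := fun x => p * ((1 - a) / (1 + a)) -
      (1 - a ^ 2) / (1 + x * a) ^ 2 * p * ((a + x) / (1 + x * a)) ^ (p - 1)) ?_ ?_ ?_
  · have hφ : ContinuousOn (fun x : ℝ => (a + x) / (1 + x * a)) (Icc 0 1) :=
      (continuousOn_const.add continuousOn_id).div (by fun_prop) fun x hx => (hden x hx).ne'
    exact ((continuousOn_const.sub (hφ.rpow_const fun _ _ => Or.inr hp0)).sub (by fun_prop))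
  · rw [interior_Icc]
    intro x ⟨hx0, hx1⟩
    have hd := hden x ⟨hx0.le, hx1.le⟩
    have hφ := (hasDerivAt_add_div_one_add_mul a x hd.ne').rpow_const
      (p := p) (Or.inl (div_pos (by linarith) hd).ne')
    have hlin := ((hasDerivAt_id x).const_sub 1).const_mul (p * ((1 - a) / (1 + a)))
    exact ((((hasDerivAt_const x (1 : ℝ)).sub hφ).sub hlin).congr_deriv (by ring)).hasDerivWithinAt
  · rw [interior_Icc]
    intro x ⟨hx0, hx1⟩
    rw [sub_nonpos]
    have hd := hden x ⟨hx0.le, hx1.le⟩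
    have hφ_pos : 0 < (a + x) / (1 + x * a) := div_pos (by linarith) hd
    have hrpow : 1 ≤ ((a + x) / (1 + x * a)) ^ (p - 1) :=
      Real.one_le_rpow_of_pos_of_le_one_of_nonpos hφ_pos
        (add_div_one_add_mul_le_one ha1 hx1.le hd) (by linarith)
    have hslope := one_sub_div_one_add_le ha0 ha1 hx0.le hx1.le
    have hslope_nonneg : 0 ≤ (1 - a ^ 2) / (1 + x * a) ^ 2 :=
      div_nonneg (by nlinarith) (by positivity)
    calc p * ((1 - a) / (1 + a))
        ≤ p * ((1 - a ^ 2) / (1 + x * a) ^ 2 * ((a + x) / (1 + x * a)) ^ (p - 1)) := by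
          gcongr
          exact hslope.trans (le_mul_of_one_le_right hslope_nonneg hrpow)
      _ = (1 - a ^ 2) / (1 + x * a) ^ 2 * p * ((a + x) / (1 + x * a)) ^ (p - 1) := by ring

theorem bohr_rogosinski_lemma_Q_antitone_general
    (r p : ℝ) (m : ℕ)
    (hr : r ∈ Set.Ico (0:ℝ) 1) (hp : p ∈ Set.Ioc (0:ℝ) 1) :
    AntitoneOn (fun x : ℝ =>
      1 - ((r ^ m + x) / (1 + x * r ^ m)) ^ p
        - p * ((1 - r ^ m) / (1 + r ^ m)) * (1 - x)) (Set.Ico (0:ℝ) 1) :=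
  (antitoneOn_one_sub_add_div_one_add_mul_rpow (pow_nonneg hr.1 m) (pow_le_one₀ hr.1 hr.2.le)
    hp.1.le hp.2).mono Ico_subset_Icc_self

theorem bohr_rogosinski_lemma_Q_antitone
    (r p : ℝ) (m : ℕ)
    (hr : r ∈ Set.Ico (0:ℝ) 1) (hp : p ∈ Set.Ioc (0:ℝ) 1) (hm : 0 < m) :
    AntitoneOn (fun x : ℝ =>
      1 - ((r ^ m + x) / (1 + x * r ^ m)) ^ p
        - p * ((1 - r ^ m) / (1 + r ^ m)) * (1 - x)) (Set.Ico (0:ℝ) 1) :=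
  bohr_rogosinski_lemma_Q_antitone_general r p m hr hp
end

section
/- For all r in [0,1), all x in [0,1), all p in (0,2], and all positive integers m, the quantity P(x) := 1 - ((r^m + x)/(1 + x·r^m))^p - (p/2)·((1 - r^m)/(1 + r^m))·(1 - x^2) is nonnegative. -/
/-!
With `t = r ^ m ∈ [0, 1]` and `u = (t + x) / (1 + x t)`, concavity of `s ↦ s ^ (p / 2)` gives
`u ^ p ≤ 1 - (p / 2) (1 - u ^ 2)`, and the Möbius identity
`1 - u ^ 2 = (1 - t ^ 2) (1 - x ^ 2) / (1 + x t) ^ 2` together with `1 + x t ≤ 1 + t`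
bounds `1 - u ^ 2` below by `(1 - t) / (1 + t) · (1 - x ^ 2)`.
-/

namespace Real

theorem rpow_le_one_sub_mul_one_sub_sq {u p : ℝ} (hu : 0 ≤ u) (hp0 : 0 ≤ p) (hp2 : p ≤ 2) :
    u ^ p ≤ 1 - p / 2 * (1 - u ^ 2) := by
  have hsq : u ^ p = (1 + (u ^ 2 - 1)) ^ (p / 2) := by
    rw [add_sub_cancel, ← rpow_natCast, ← rpow_mul hu]
    congr 1
    ring
  rw [hsq]
  calc (1 + (u ^ 2 - 1)) ^ (p / 2) ≤ 1 + p / 2 * (u ^ 2 - 1) :=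
        rpow_one_add_le_one_add_mul_self (by nlinarith) (by linarith) (by linarith)
    _ = 1 - p / 2 * (1 - u ^ 2) := by ring

end Real

theorem one_sub_div_one_add_mul_sq {t x : ℝ} (h : 1 + x * t ≠ 0) :
    1 - ((t + x) / (1 + x * t)) ^ 2 = (1 - t ^ 2) * (1 - x ^ 2) / (1 + x * t) ^ 2 := by
  rw [div_pow, one_sub_div (pow_ne_zero 2 h)]
  ring

theorem div_mul_one_sub_sq_le_one_sub_div_one_add_mul_sq {t x : ℝ} (ht0 : 0 ≤ t) (ht1 : t ≤ 1)
    (hx0 : 0 ≤ x) (hx1 : x ≤ 1) :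
    (1 - t) / (1 + t) * (1 - x ^ 2) ≤ 1 - ((t + x) / (1 + x * t)) ^ 2 := by
  have hxt : 0 < 1 + x * t := by positivity
  rw [one_sub_div_one_add_mul_sq hxt.ne']
  calc (1 - t) / (1 + t) * (1 - x ^ 2) = (1 - t ^ 2) * (1 - x ^ 2) / (1 + t) ^ 2 := by
        field_simp
        ring
    _ ≤ (1 - t ^ 2) * (1 - x ^ 2) / (1 + x * t) ^ 2 := by
        gcongr
        · exact mul_nonneg (by nlinarith) (by nlinarith)
        · nlinarith

theorem bohr_rogosinski_lemma_P_nonneg_general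
    (r x p : ℝ) (m : ℕ)
    (hr : r ∈ Set.Ico (0:ℝ) 1) (hx : x ∈ Set.Ico (0:ℝ) 1)
    (hp : p ∈ Set.Ioc (0:ℝ) 2) :
    0 ≤ 1 - ((r ^ m + x) / (1 + x * r ^ m)) ^ p
        - (p / 2) * ((1 - r ^ m) / (1 + r ^ m)) * (1 - x ^ 2) := by
  obtain ⟨hr0, hr1⟩ := hr
  obtain ⟨hx0, hx1⟩ := hx
  obtain ⟨hp0, hp2⟩ := hp
  have ht0 : 0 ≤ r ^ m := pow_nonneg hr0 m
  have ht1 : r ^ m ≤ 1 := pow_le_one₀ hr0 hr1.le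
  have hpow := Real.rpow_le_one_sub_mul_one_sub_sq
    (u := (r ^ m + x) / (1 + x * r ^ m)) (by positivity) hp0.le hp2
  have hmobius := div_mul_one_sub_sq_le_one_sub_div_one_add_mul_sq ht0 ht1 hx0 hx1.le
  have := mul_le_mul_of_nonneg_left hmobius (by linarith : 0 ≤ p / 2)
  linarith

theorem bohr_rogosinski_lemma_P_nonneg
    (r x p : ℝ) (m : ℕ)
    (hr : r ∈ Set.Ico (0:ℝ) 1) (hx : x ∈ Set.Ico (0:ℝ) 1)
    (hp : p ∈ Set.Ioc (0:ℝ) 2) (hm : 0 < m) :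
    0 ≤ 1 - ((r ^ m + x) / (1 + x * r ^ m)) ^ p
        - (p / 2) * ((1 - r ^ m) / (1 + r ^ m)) * (1 - x ^ 2) :=
  bohr_rogosinski_lemma_P_nonneg_general r x p m hr hx hp
end

section
/- The function x ↦ 1 - ((r^m + x)/(1 + x·r^m))^p - (p/2)·((1 - r^m)/(1 + r^m))·(1 - x^2) is monotonically decreasing on [0,1) for every fixed r ∈ [0,1), p ∈ (0,2], and positive integer m, and its limit as x → 1⁻ is 0. -/
/-!
Write `s = r ^ m ∈ [0, 1]` and `t(x) = (s + x) / (1 + x s) ∈ (0, 1]`, so that `t' = (1 - s²) / (1 + x s)²`.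
The derivative of `P` is `p ((1 - s) / (1 + s) x - t ^ (p - 1) t')`. Since `t ≤ 1` and `p - 1 ≤ 1`, we have
`t ≤ t ^ (p - 1)`, so it suffices that `(1 - s) / (1 + s) x ≤ t t'`, which after clearing denominators is
`x (1 + x s)³ ≤ (s + x) (1 + s)²`. The limit is the value `P(1) = 0`, by continuity.
-/

open Set Filter Topology

/-- The function `P` of the paper, with `s` standing for `r ^ m`. -/
noncomputable def bohrRogosinskiP (s p x : ℝ) : ℝ :=
  1 - ((s + x) / (1 + x * s)) ^ p - (p / 2) * ((1 - s) / (1 + s)) * (1 - x ^ 2)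

section
variable {s x : ℝ}

lemma mobius_le_one (hs0 : 0 ≤ s) (hs1 : s ≤ 1) (hx0 : 0 ≤ x) (hx1 : x ≤ 1) :
    (s + x) / (1 + x * s) ≤ 1 := by
  rw [div_le_one (by positivity)]
  nlinarith [mul_nonneg (sub_nonneg.2 hs1) (sub_nonneg.2 hx1)]

lemma hasDerivAt_mobius (h : 1 + x * s ≠ 0) :
    HasDerivAt (fun y => (s + y) / (1 + y * s)) ((1 - s ^ 2) / (1 + x * s) ^ 2) x := by
  have hnum : HasDerivAt (fun y => s + y) 1 x := (hasDerivAt_id x).const_add s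
  have hden : HasDerivAt (fun y => 1 + y * s) s x := by
    simpa using ((hasDerivAt_id x).mul_const s).const_add 1
  exact (hnum.div hden h).congr_deriv (by ring)

lemma mul_one_add_mul_pow_three_le (hs0 : 0 ≤ s) (hx0 : 0 ≤ x) (hx1 : x ≤ 1) :
    x * (1 + x * s) ^ 3 ≤ (s + x) * (1 + s) ^ 2 :=
  calc x * (1 + x * s) ^ 3 ≤ x * (1 + s) ^ 3 := by
        gcongr
        nlinarith
    _ = x * (1 + s) * (1 + s) ^ 2 := by ring
    _ ≤ (s + x) * (1 + s) ^ 2 := by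
        gcongr
        nlinarith

lemma one_sub_div_one_add_mul_le (hs0 : 0 ≤ s) (hs1 : s ≤ 1) (hx0 : 0 ≤ x) (hx1 : x ≤ 1) :
    (1 - s) / (1 + s) * x ≤ (s + x) / (1 + x * s) * ((1 - s ^ 2) / (1 + x * s) ^ 2) := by
  rw [div_mul_eq_mul_div, div_mul_div_comm, div_le_div_iff₀ (by positivity) (by positivity)]
  have := mul_le_mul_of_nonneg_left (mul_one_add_mul_pow_three_le hs0 hx0 hx1)
    (sub_nonneg.2 hs1)
  nlinarith

variable {p : ℝ}

lemma hasDerivAt_bohrRogosinskiP (hs0 : 0 ≤ s) (hx0 : 0 < x) :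
    HasDerivAt (bohrRogosinskiP s p)
      (p * ((1 - s) / (1 + s) * x
        - ((s + x) / (1 + x * s)) ^ (p - 1) * ((1 - s ^ 2) / (1 + x * s) ^ 2))) x := by
  have hmob : 0 < (s + x) / (1 + x * s) := by positivity
  have hpow := (hasDerivAt_mobius (s := s) (by positivity : 1 + x * s ≠ 0)).rpow_const
    (p := p) (Or.inl hmob.ne')
  have hquad : HasDerivAt (fun y : ℝ => 1 - y ^ 2) (-(2 * x)) x := by
    simpa using (hasDerivAt_pow 2 x).const_sub 1
  exact ((hpow.const_sub 1).sub (hquad.const_mul ((p / 2) * ((1 - s) / (1 + s))))).congr_deriv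
    (by ring)

lemma bohrRogosinskiP_deriv_nonpos (hs0 : 0 ≤ s) (hs1 : s ≤ 1) (hp0 : 0 ≤ p) (hp2 : p ≤ 2)
    (hx0 : 0 < x) (hx1 : x ≤ 1) :
    p * ((1 - s) / (1 + s) * x
      - ((s + x) / (1 + x * s)) ^ (p - 1) * ((1 - s ^ 2) / (1 + x * s) ^ 2)) ≤ 0 := by
  set t := (s + x) / (1 + x * s)
  have ht0 : 0 < t := by positivity
  have ht_le_rpow : t ≤ t ^ (p - 1) :=
    calc t = t ^ (1 : ℝ) := (Real.rpow_one t).symm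
      _ ≤ t ^ (p - 1) := Real.rpow_le_rpow_of_exponent_ge ht0
          (mobius_le_one hs0 hs1 hx0.le hx1) (by linarith)
  have hslope : 0 ≤ (1 - s ^ 2) / (1 + x * s) ^ 2 := by
    have : s ^ 2 ≤ 1 := pow_le_one₀ hs0 hs1
    positivity
  refine mul_nonpos_of_nonneg_of_nonpos hp0 (sub_nonpos.2 ?_)
  exact (one_sub_div_one_add_mul_le hs0 hs1 hx0.le hx1).trans
    (mul_le_mul_of_nonneg_right ht_le_rpow hslope)

lemma continuousAt_bohrRogosinskiP (hs0 : 0 ≤ s) (hp0 : 0 ≤ p) (hx0 : 0 ≤ x) :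
    ContinuousAt (bohrRogosinskiP s p) x := by
  have hmob : ContinuousAt (fun y => (s + y) / (1 + y * s)) x :=
    (continuousAt_const.add continuousAt_id).div (by fun_prop) (by positivity)
  exact (continuousAt_const.sub (hmob.rpow_const (Or.inr hp0))).sub (by fun_prop)

lemma bohrRogosinskiP_one (hs0 : 0 ≤ s) : bohrRogosinskiP s p 1 = 0 := by
  have : (s + 1) / (1 + s) = 1 := (div_eq_one_iff_eq (by positivity)).2 (add_comm s 1)
  simp [bohrRogosinskiP, this]

lemma antitoneOn_bohrRogosinskiP (hs0 : 0 ≤ s) (hs1 : s ≤ 1) (hp0 : 0 ≤ p) (hp2 : p ≤ 2) :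
    AntitoneOn (bohrRogosinskiP s p) (Ico 0 1) := by
  refine antitoneOn_of_deriv_nonpos (convex_Ico 0 1)
    (fun x hx => (continuousAt_bohrRogosinskiP hs0 hp0 hx.1).continuousWithinAt) ?_ ?_
  all_goals rw [interior_Ico]; intro x hx
  · exact (hasDerivAt_bohrRogosinskiP hs0 hx.1).differentiableAt.differentiableWithinAt
  · rw [(hasDerivAt_bohrRogosinskiP hs0 hx.1).deriv]
    exact bohrRogosinskiP_deriv_nonpos hs0 hs1 hp0 hp2 hx.1 hx.2.le

lemma tendsto_bohrRogosinskiP_one (hs0 : 0 ≤ s) (hp0 : 0 ≤ p) :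
    Tendsto (bohrRogosinskiP s p) (𝓝[<] 1) (𝓝 0) := by
  rw [← bohrRogosinskiP_one (p := p) hs0]
  exact (continuousAt_bohrRogosinskiP hs0 hp0 zero_le_one).tendsto.mono_left nhdsWithin_le_nhds

end

theorem bohr_rogosinski_lemma_P_antitone_and_limit_general
    (r p : ℝ) (m : ℕ)
    (hr : r ∈ Set.Ico (0:ℝ) 1) (hp : p ∈ Set.Ioc (0:ℝ) 2) :
    AntitoneOn (fun x : ℝ =>
      1 - ((r ^ m + x) / (1 + x * r ^ m)) ^ p
        - (p / 2) * ((1 - r ^ m) / (1 + r ^ m)) * (1 - x ^ 2)) (Set.Ico (0:ℝ) 1)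
    ∧ Filter.Tendsto (fun x : ℝ =>
      1 - ((r ^ m + x) / (1 + x * r ^ m)) ^ p
        - (p / 2) * ((1 - r ^ m) / (1 + r ^ m)) * (1 - x ^ 2))
      (nhdsWithin 1 (Set.Iio 1)) (nhds 0) := by
  have hs0 : 0 ≤ r ^ m := pow_nonneg hr.1 m
  have hs1 : r ^ m ≤ 1 := pow_le_one₀ hr.1 hr.2.le
  exact ⟨antitoneOn_bohrRogosinskiP hs0 hs1 hp.1.le hp.2,
    tendsto_bohrRogosinskiP_one hs0 hp.1.le⟩

theorem bohr_rogosinski_lemma_P_antitone_and_limit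
    (r p : ℝ) (m : ℕ)
    (hr : r ∈ Set.Ico (0:ℝ) 1) (hp : p ∈ Set.Ioc (0:ℝ) 2) (hm : 0 < m) :
    AntitoneOn (fun x : ℝ =>
      1 - ((r ^ m + x) / (1 + x * r ^ m)) ^ p
        - (p / 2) * ((1 - r ^ m) / (1 + r ^ m)) * (1 - x ^ 2)) (Set.Ico (0:ℝ) 1)
    ∧ Filter.Tendsto (fun x : ℝ =>
      1 - ((r ^ m + x) / (1 + x * r ^ m)) ^ p
        - (p / 2) * ((1 - r ^ m) / (1 + r ^ m)) * (1 - x ^ 2))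
      (nhdsWithin 1 (Set.Iio 1)) (nhds 0) :=
  bohr_rogosinski_lemma_P_antitone_and_limit_general r p m hr hp
end

section
/- Let f(z) = Σ a_n z^n be analytic on 𝔻 with |f| ≤ 1, let p ∈ (0,1], N and m positive integers. If r ∈ [0,1) satisfies 2 r^N (1 + r^m) ≤ p (1 - r)(1 - r^m), then for all |z| = r: |f(z^m)|^p + Σ_{n≥N} |a_n| r^n ≤ 1. -/
/-!
Let `α = ‖a 0‖`. By the Schwarz–Pick lemma `‖f w‖ ≤ (α + ‖w‖) / (1 + α ‖w‖)`. Averaging `f` over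
the rotations by the `n`-th roots of unity gives a function of `z ^ n` with coefficients
`a (n * k)`, still bounded by `1`; the Schwarz–Pick bound on its derivative at `0` is Wiener's
inequality `‖a n‖ ≤ 1 - α ^ 2` (`n ≥ 1`), so the tail is at most `(1 - α ^ 2) r ^ N / (1 - r)`.
For `T = (α + s) / (1 + α s)` with `s = r ^ m`, Bernoulli's inequality `T ^ p ≤ 1 - p (1 - T)`
and `1 - T = (1 - α) (1 - s) / (1 + α s)` reduce the claim to
`(1 + α) (1 + α s) r ^ N ≤ p (1 - r) (1 - s)`, the hypothesis on `r` since
`(1 + α) (1 + α s) ≤ 2 (1 + s)`.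
-/

open Metric Set Filter ComplexConjugate
open scoped NNReal Topology

section PowerSeries

variable {b : ℕ → ℂ} {F : ℂ → ℂ} {R : ℝ≥0}

theorem hasFPowerSeriesOnBall_ofScalars_of_hasSum (hR : 0 < R)
    (h : ∀ z ∈ ball (0 : ℂ) R, HasSum (fun k => b k * z ^ k) (F z)) :
    HasFPowerSeriesOnBall F (FormalMultilinearSeries.ofScalars ℂ b) 0 R where
  r_le := by
    refine ENNReal.le_of_forall_nnreal_lt fun ρ hρ => ?_
    have hρR : ((ρ : ℝ) : ℂ) ∈ ball (0 : ℂ) R := by simpa using hρ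
    refine FormalMultilinearSeries.le_radius_of_tendsto _ (l := 0) ?_
    simpa [FormalMultilinearSeries.ofScalars_norm] using
      (h _ hρR).summable.tendsto_atTop_zero.norm
  r_pos := by simpa using hR
  hasSum {y} hy := by
    have hy' : y ∈ ball (0 : ℂ) R := by simpa using hy
    simpa [FormalMultilinearSeries.ofScalars_apply_eq, mul_comm] using h y hy'

theorem differentiableOn_of_hasSum (hR : 0 < R)
    (h : ∀ z ∈ ball (0 : ℂ) R, HasSum (fun k => b k * z ^ k) (F z)) :
    DifferentiableOn ℂ F (ball 0 R) := by
  simpa using (hasFPowerSeriesOnBall_ofScalars_of_hasSum hR h).analyticOnNhd.differentiableOn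

theorem deriv_zero_eq_of_hasSum (hR : 0 < R)
    (h : ∀ z ∈ ball (0 : ℂ) R, HasSum (fun k => b k * z ^ k) (F z)) :
    deriv F 0 = b 1 := by
  simp [(hasFPowerSeriesOnBall_ofScalars_of_hasSum hR h).hasFPowerSeriesAt.deriv]

theorem HasSum.eq_coeff_zero {c : ℂ} (h : HasSum (fun k => b k * 0 ^ k) c) : c = b 0 :=
  h.unique <| by
    convert hasSum_single (f := fun k => b k * (0 : ℂ) ^ k) 0 fun k hk => by simp [hk] using 1
    simp

end PowerSeries

section DiskAutomorphism

noncomputable def diskAut (ω w : ℂ) : ℂ := (w - ω) / (1 - conj ω * w)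

variable {ω w : ℂ}

theorem sq_norm_one_sub_conj_mul (ω w : ℂ) :
    ‖1 - conj ω * w‖ ^ 2 = ‖w - ω‖ ^ 2 + (1 - ‖ω‖ ^ 2) * (1 - ‖w‖ ^ 2) := by
  simp only [Complex.sq_norm, Complex.normSq_apply, Complex.sub_re, Complex.sub_im,
    Complex.mul_re, Complex.mul_im, Complex.conj_re, Complex.conj_im, Complex.one_re,
    Complex.one_im]
  ring

theorem one_sub_conj_mul_ne_zero (hω : ‖ω‖ < 1) (hw : ‖w‖ ≤ 1) : 1 - conj ω * w ≠ 0 := by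
  intro h
  have h1 : ‖conj ω * w‖ = 1 := by rw [← sub_eq_zero.1 h, norm_one]
  rw [norm_mul, Complex.norm_conj] at h1
  nlinarith [norm_nonneg ω, norm_nonneg w]

theorem norm_one_sub_conj_mul_self (hω : ‖ω‖ ≤ 1) : ‖1 - conj ω * ω‖ = 1 - ‖ω‖ ^ 2 := by
  rw [Complex.conj_mul', ← Complex.ofReal_pow, ← Complex.ofReal_one, ← Complex.ofReal_sub,
    Complex.norm_real, Real.norm_of_nonneg (sub_nonneg.2 (pow_le_one₀ (norm_nonneg ω) hω))]

theorem diskAut_self (ω : ℂ) : diskAut ω ω = 0 := by simp [diskAut]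

theorem norm_diskAut_le_one (hω : ‖ω‖ ≤ 1) (hw : ‖w‖ ≤ 1) : ‖diskAut ω w‖ ≤ 1 := by
  rw [diskAut, norm_div]
  refine div_le_one_of_le₀ (le_of_pow_le_pow_left₀ two_ne_zero (norm_nonneg _) ?_)
    (norm_nonneg _)
  rw [sq_norm_one_sub_conj_mul]
  nlinarith [mul_nonneg (sub_nonneg.2 (pow_le_one₀ (n := 2) (norm_nonneg ω) hω))
    (sub_nonneg.2 (pow_le_one₀ (n := 2) (norm_nonneg w) hw))]

theorem mapsTo_diskAut (hω : ‖ω‖ ≤ 1) :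
    MapsTo (diskAut ω) (closedBall 0 1) (closedBall 0 1) := fun w hw => by
  rw [mem_closedBall_zero_iff] at hw ⊢
  exact norm_diskAut_le_one hω hw

theorem diskAut_neg_diskAut (hω : ‖ω‖ < 1) (hw : ‖w‖ ≤ 1) :
    diskAut (-ω) (diskAut ω w) = w := by
  have hD := one_sub_conj_mul_ne_zero hω hw
  have hω' : (1 : ℂ) - conj ω * ω ≠ 0 := one_sub_conj_mul_ne_zero hω hω.le
  have hden :
      1 + conj ω * ((w - ω) / (1 - conj ω * w)) = (1 - conj ω * ω) / (1 - conj ω * w) := by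
    field_simp
    ring
  have hnum : (w - ω) / (1 - conj ω * w) + ω = w * (1 - conj ω * ω) / (1 - conj ω * w) := by
    rw [div_add' _ _ _ hD]
    ring
  rw [diskAut, diskAut, map_neg, neg_mul, sub_neg_eq_add, sub_neg_eq_add, hden, hnum,
    div_div_div_cancel_right₀ hD, mul_div_cancel_right₀ _ hω']

theorem norm_diskAut_neg_le (hω : ‖ω‖ ≤ 1) (hw : ‖w‖ ≤ 1) :
    ‖diskAut (-ω) w‖ ≤ (‖ω‖ + ‖w‖) / (1 + ‖ω‖ * ‖w‖) := by
  have key := sq_norm_one_sub_conj_mul (-ω) w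
  rw [map_neg, neg_mul, sub_neg_eq_add, sub_neg_eq_add, norm_neg] at key
  rw [diskAut, map_neg, neg_mul, sub_neg_eq_add, sub_neg_eq_add, norm_div]
  have hX : ‖1 + conj ω * w‖ ≤ 1 + ‖ω‖ * ‖w‖ := by
    simpa using norm_add_le (1 : ℂ) (conj ω * w)
  have hX0 := norm_nonneg (1 + conj ω * w)
  generalize ‖1 + conj ω * w‖ = X at key hX hX0 ⊢
  rcases hX0.eq_or_lt with hX0 | hX0
  · rw [← hX0, div_zero]; positivity
  rw [div_le_div_iff₀ hX0 (by positivity)]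
  refine le_of_pow_le_pow_left₀ two_ne_zero (by positivity) ?_
  rw [mul_pow, mul_pow]
  -- `(1 + ‖ω‖ ‖w‖) ^ 2 - (‖ω‖ + ‖w‖) ^ 2 = (1 - ‖ω‖ ^ 2) (1 - ‖w‖ ^ 2)`
  nlinarith [mul_le_mul_of_nonneg_left (pow_le_pow_left₀ hX0.le hX 2)
    (mul_nonneg (sub_nonneg.2 (pow_le_one₀ (n := 2) (norm_nonneg ω) hω))
      (sub_nonneg.2 (pow_le_one₀ (n := 2) (norm_nonneg w) hw)))]

theorem hasDerivAt_diskAut (hω : ‖ω‖ < 1) :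
    HasDerivAt (diskAut ω) (1 - conj ω * ω)⁻¹ ω := by
  have hD : (1 : ℂ) - conj ω * ω ≠ 0 := one_sub_conj_mul_ne_zero hω hω.le
  refine (((hasDerivAt_id' ω).sub_const ω).div
    (((hasDerivAt_id' ω).const_mul (conj ω)).const_sub 1) hD).congr_deriv ?_
  field_simp
  ring

theorem differentiableOn_diskAut (hω : ‖ω‖ < 1) :
    DifferentiableOn ℂ (diskAut ω) (closedBall 0 1) :=
  DifferentiableOn.div (by fun_prop) (by fun_prop) fun w hw =>
    one_sub_conj_mul_ne_zero hω (mem_closedBall_zero_iff.1 hw)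

end DiskAutomorphism

section SchwarzPick

variable {u : ℂ → ℂ}

theorem monotoneOn_add_div_one_add_mul {a : ℝ} (ha0 : 0 ≤ a) (ha1 : a ≤ 1) :
    MonotoneOn (fun s => (a + s) / (1 + a * s)) (Ici 0) := by
  intro t ht s hs hts
  simp only [mem_Ici] at ht hs
  rw [div_le_div_iff₀ (by positivity) (by positivity)]
  nlinarith [mul_nonneg (sub_nonneg.2 hts) (sub_nonneg.2 (mul_le_one₀ ha1 ha0 ha1))]

theorem norm_apply_le_schwarzPick (hd : DifferentiableOn ℂ u (ball 0 1))
    (hu : MapsTo u (ball 0 1) (closedBall 0 1)) {z : ℂ} (hz : z ∈ ball 0 1) :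
    ‖u z‖ ≤ (‖u 0‖ + ‖z‖) / (1 + ‖u 0‖ * ‖z‖) := by
  have hz1 : ‖z‖ < 1 := mem_ball_zero_iff.1 hz
  have hu0 : ‖u 0‖ ≤ 1 := mem_closedBall_zero_iff.1 (hu (mem_ball_self one_pos))
  have huz : ‖u z‖ ≤ 1 := mem_closedBall_zero_iff.1 (hu hz)
  rcases hu0.lt_or_eq with hω | hω
  · have hv : ‖diskAut (u 0) (u z)‖ ≤ ‖z‖ :=
      Complex.norm_le_norm_of_mapsTo_ball ((differentiableOn_diskAut hω).comp hd hu)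
        ((mapsTo_diskAut hω.le).comp hu) (diskAut_self _) hz1
    calc ‖u z‖ = ‖diskAut (-u 0) (diskAut (u 0) (u z))‖ := by
          rw [diskAut_neg_diskAut hω huz]
      _ ≤ _ := norm_diskAut_neg_le hu0 (hv.trans hz1.le)
      _ ≤ _ := monotoneOn_add_div_one_add_mul (norm_nonneg _) hu0 (norm_nonneg _)
          (norm_nonneg z) hv
  · rwa [hω, one_mul, div_self (by positivity)]

theorem norm_deriv_zero_le_schwarzPick (hd : DifferentiableOn ℂ u (ball 0 1))
    (hu : MapsTo u (ball 0 1) (closedBall 0 1)) :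
    ‖deriv u 0‖ ≤ 1 - ‖u 0‖ ^ 2 := by
  have hball : ball (0 : ℂ) 1 ∈ 𝓝 0 := ball_mem_nhds 0 one_pos
  have hu0 : ‖u 0‖ ≤ 1 := mem_closedBall_zero_iff.1 (hu (mem_of_mem_nhds hball))
  rcases hu0.lt_or_eq with hω | hω
  · have hv := Complex.norm_deriv_le_one_of_mapsTo_ball
      ((differentiableOn_diskAut hω).comp hd hu)
      (by simpa [diskAut_self] using (mapsTo_diskAut hω.le).comp hu) one_pos
    have hchain := (hasDerivAt_diskAut hω).comp 0 (hd.differentiableAt hball).hasDerivAt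
    rwa [hchain.deriv, norm_mul, norm_inv, norm_one_sub_conj_mul_self hu0,
      inv_mul_le_iff₀ (sub_pos.2 (pow_lt_one₀ (norm_nonneg _) hω two_ne_zero)), mul_one] at hv
  · have hconst : u =ᶠ[𝓝 0] fun _ => u 0 :=
      Complex.eventually_eq_of_isLocalMax_norm
        (eventually_of_mem hball fun z hz => hd.differentiableAt (isOpen_ball.mem_nhds hz))
        (eventually_of_mem hball fun z hz => by
          simpa [hω] using mem_closedBall_zero_iff.1 (hu hz))
    rw [hconst.deriv_eq, deriv_const, hω]
    norm_num

end SchwarzPick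

section Wiener

theorem IsPrimitiveRoot.sum_pow_mul_eq_ite {R : Type*} [CommRing R] [IsDomain R] {ζ : R}
    {n : ℕ} (hζ : IsPrimitiveRoot ζ n) (k : ℕ) :
    ∑ j ∈ Finset.range n, ζ ^ (j * k) = if n ∣ k then (n : R) else 0 := by
  simp_rw [pow_mul']
  split_ifs with hk
  · simp [(hζ.pow_eq_one_iff_dvd k).2 hk]
  · have hne : ζ ^ k - 1 ≠ 0 := sub_ne_zero.2 (mt (hζ.pow_eq_one_iff_dvd k).1 hk)
    have hgeom := geom_sum_mul (ζ ^ k) n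
    rw [← pow_mul, pow_mul', hζ.pow_eq_one, one_pow, sub_self] at hgeom
    exact (mul_eq_zero.1 hgeom).resolve_right hne

variable {b : ℕ → ℂ} {F : ℂ → ℂ}

theorem hasSum_average_rotations {n : ℕ} (hn : 0 < n) {ζ : ℂ} (hζ : IsPrimitiveRoot ζ n)
    (h : ∀ z ∈ ball (0 : ℂ) 1, HasSum (fun k => b k * z ^ k) (F z)) {z : ℂ}
    (hz : z ∈ ball 0 1) :
    HasSum (fun k => b (n * k) * (z ^ n) ^ k)
      ((n : ℂ)⁻¹ * ∑ j ∈ Finset.range n, F (ζ ^ j * z)) := by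
  have hrot (j : ℕ) : ζ ^ j * z ∈ ball 0 1 := by
    simpa [hζ.norm'_eq_one hn.ne'] using hz
  have hfilter : (fun k => (n : ℂ)⁻¹ * ∑ j ∈ Finset.range n, b k * (ζ ^ j * z) ^ k) =
      fun k => if n ∣ k then b k * z ^ k else 0 := by
    funext k
    have : ∑ j ∈ Finset.range n, b k * (ζ ^ j * z) ^ k =
        (∑ j ∈ Finset.range n, ζ ^ (j * k)) * (b k * z ^ k) := by
      rw [Finset.sum_mul]
      exact Finset.sum_congr rfl fun j _ => by ring
    rw [this, hζ.sum_pow_mul_eq_ite]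
    split_ifs
    · field_simp [show (n : ℂ) ≠ 0 by exact_mod_cast hn.ne']
    · simp
  have hsum := (hasSum_sum (s := Finset.range n) fun j _ => h _ (hrot j)).mul_left (n : ℂ)⁻¹
  rw [hfilter] at hsum
  have hmul := ((mul_right_injective₀ hn.ne').hasSum_iff fun k hk => if_neg fun ⟨c, hc⟩ =>
    hk ⟨c, hc.symm⟩).2 hsum
  simpa [Function.comp_def, pow_mul] using hmul

theorem norm_coeff_le_one_sub_sq
    (h : ∀ z ∈ ball (0 : ℂ) 1, HasSum (fun k => b k * z ^ k) (F z))
    (hF : MapsTo F (ball 0 1) (closedBall 0 1)) {n : ℕ} (hn : 0 < n) :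
    ‖b n‖ ≤ 1 - ‖b 0‖ ^ 2 := by
  obtain ⟨ζ, hζ⟩ : ∃ ζ : ℂ, IsPrimitiveRoot ζ n := ⟨_, Complex.isPrimitiveRoot_exp n hn.ne'⟩
  set H : ℂ → ℂ := fun w => ∑' k, b (n * k) * w ^ k
  have hH (w : ℂ) (hw : w ∈ ball 0 1) :
      HasSum (fun k => b (n * k) * w ^ k) (H w) ∧ H w ∈ closedBall 0 1 := by
    obtain ⟨z, rfl⟩ := IsAlgClosed.exists_pow_nat_eq w hn
    have hz : z ∈ ball 0 1 := by
      simpa [norm_pow, pow_lt_one_iff_of_nonneg (norm_nonneg z) hn.ne'] using hw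
    have hsum := hasSum_average_rotations hn hζ h hz
    refine ⟨hsum.summable.hasSum, ?_⟩
    rw [show H (z ^ n) = _ from hsum.tsum_eq, mem_closedBall_zero_iff, norm_mul, norm_inv,
      Complex.norm_natCast, inv_mul_le_one₀ (by exact_mod_cast hn)]
    calc ‖∑ j ∈ Finset.range n, F (ζ ^ j * z)‖ ≤ ∑ j ∈ Finset.range n, (1 : ℝ) :=
          norm_sum_le_of_le _ fun j _ => mem_closedBall_zero_iff.1 <| hF <| by
            simpa [hζ.norm'_eq_one hn.ne'] using hz
      _ = n := by simp
  have hHsum (w : ℂ) (hw : w ∈ ball 0 1) := (hH w hw).1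
  have hpick := norm_deriv_zero_le_schwarzPick
    (differentiableOn_of_hasSum (R := 1) one_pos hHsum) fun w hw => (hH w hw).2
  rwa [deriv_zero_eq_of_hasSum (R := 1) one_pos hHsum,
    (hHsum 0 (mem_ball_self one_pos)).eq_coeff_zero, mul_one, mul_zero] at hpick

end Wiener

theorem tsum_mul_pow_le {c : ℕ → ℝ} {C r : ℝ} (hc0 : ∀ n, 0 ≤ c n) (hcC : ∀ n, c n ≤ C)
    (hr0 : 0 ≤ r) (hr1 : r < 1) (N : ℕ) :
    ∑' n, c n * r ^ (N + n) ≤ C * r ^ N / (1 - r) := by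
  have hgeom : HasSum (fun n => C * r ^ (N + n)) (C * r ^ N / (1 - r)) := by
    simpa [pow_add, mul_assoc, div_eq_mul_inv] using
      (hasSum_geometric_of_lt_one hr0 hr1).mul_left (C * r ^ N)
  have hle (n : ℕ) : c n * r ^ (N + n) ≤ C * r ^ (N + n) :=
    mul_le_mul_of_nonneg_right (hcC n) (by positivity)
  calc ∑' n, c n * r ^ (N + n) ≤ ∑' n, C * r ^ (N + n) :=
        Summable.tsum_le_tsum hle
          (hgeom.summable.of_nonneg_of_le (fun n => by have := hc0 n; positivity) hle)
          hgeom.summable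
    _ = C * r ^ N / (1 - r) := hgeom.tsum_eq

theorem schwarzPick_rpow_add_geom_tail_le_one {a s r ρ p : ℝ} (ha0 : 0 ≤ a) (ha1 : a ≤ 1)
    (hs : 0 ≤ s) (hr : r < 1) (hρ : 0 ≤ ρ) (hp0 : 0 ≤ p) (hp1 : p ≤ 1)
    (h : 2 * ρ * (1 + s) ≤ p * (1 - r) * (1 - s)) :
    ((a + s) / (1 + a * s)) ^ p + (1 - a ^ 2) * ρ / (1 - r) ≤ 1 := by
  have hden : 0 < 1 + a * s := by positivity
  set T := (a + s) / (1 + a * s) with hT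
  have hgap : 1 - T = (1 - a) * (1 - s) / (1 + a * s) := by
    rw [hT]
    field_simp
    ring
  have hpow : T ^ p ≤ 1 - p * (1 - T) := by
    have := rpow_one_add_le_one_add_mul_self (s := T - 1)
      (by linarith [show 0 ≤ T by positivity]) hp0 hp1
    rw [add_sub_cancel] at this
    linarith
  have htail : (1 - a ^ 2) * ρ / (1 - r) ≤ p * (1 - T) := by
    rw [hgap, mul_div_assoc', div_le_div_iff₀ (by linarith) hden]
    have hfac : (1 + a) * (1 + a * s) ≤ 2 * (1 + s) := by nlinarith
    calc (1 - a ^ 2) * ρ * (1 + a * s) = (1 - a) * ρ * ((1 + a) * (1 + a * s)) := by ring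
      _ ≤ (1 - a) * ρ * (2 * (1 + s)) := by gcongr
      _ = (1 - a) * (2 * ρ * (1 + s)) := by ring
      _ ≤ (1 - a) * (p * (1 - r) * (1 - s)) := by gcongr
      _ = p * ((1 - a) * (1 - s)) * (1 - r) := by ring
  linarith

theorem bohr_rogosinski_tail_N
    (f : ℂ → ℂ) (a : ℕ → ℂ) (p : ℝ) (N m : ℕ) (r : ℝ)
    (hf : DifferentiableOn ℂ f (ball (0:ℂ) 1))
    (hb : ∀ z ∈ ball (0:ℂ) 1, ‖f z‖ ≤ 1)
    (hsum : ∀ z ∈ ball (0:ℂ) 1, HasSum (fun n : ℕ => a n * z ^ n) (f z))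
    (hp : p ∈ Set.Ioc (0:ℝ) 1) (hN : 0 < N) (hm : 0 < m)
    (hr : r ∈ Set.Ico (0:ℝ) 1)
    (hcond : 2 * r ^ N * (1 + r ^ m) ≤ p * (1 - r) * (1 - r ^ m)) :
    ∀ z : ℂ, ‖z‖ = r →
      ‖f (z ^ m)‖ ^ p
        + ∑' n : ℕ, ‖a (N + n)‖ * r ^ (N + n) ≤ 1 := by
  intro z hz
  obtain ⟨hp0, hp1⟩ := hp
  obtain ⟨hr0, hr1⟩ := hr
  have hmaps : MapsTo f (ball 0 1) (closedBall 0 1) := fun w hw =>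
    mem_closedBall_zero_iff.2 (hb w hw)
  have hf0 : f 0 = a 0 := (hsum 0 (mem_ball_self one_pos)).eq_coeff_zero
  have ha0 : ‖a 0‖ ≤ 1 := hf0 ▸ hb 0 (mem_ball_self one_pos)
  have hzm : z ^ m ∈ ball (0 : ℂ) 1 := by
    simpa [norm_pow, hz] using pow_lt_one₀ hr0 hr1 hm.ne'
  have hvalue : ‖f (z ^ m)‖ ≤ (‖a 0‖ + r ^ m) / (1 + ‖a 0‖ * r ^ m) := by
    simpa [hf0, norm_pow, hz] using norm_apply_le_schwarzPick hf hmaps hzm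
  have htail : ∑' n, ‖a (N + n)‖ * r ^ (N + n) ≤ (1 - ‖a 0‖ ^ 2) * r ^ N / (1 - r) :=
    tsum_mul_pow_le (c := fun n => ‖a (N + n)‖) (fun n => norm_nonneg _)
      (fun n => norm_coeff_le_one_sub_sq hsum hmaps (by omega)) hr0 hr1 N
  calc ‖f (z ^ m)‖ ^ p + ∑' n, ‖a (N + n)‖ * r ^ (N + n)
      ≤ ((‖a 0‖ + r ^ m) / (1 + ‖a 0‖ * r ^ m)) ^ p + (1 - ‖a 0‖ ^ 2) * r ^ N / (1 - r) :=
        add_le_add (Real.rpow_le_rpow (norm_nonneg _) hvalue hp0.le) htail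
    _ ≤ 1 := schwarzPick_rpow_add_geom_tail_le_one (norm_nonneg _) ha0 (pow_nonneg hr0 m) hr1
        (pow_nonneg hr0 N) hp0.le hp1 hcond
end

section
/- Let f(z) = Σ a_n z^n be analytic on 𝔻 with |f| ≤ 1, p ∈ (0,1], m a positive integer. If r ∈ [0,1) satisfies 2 r (1 + r^m) ≤ p (1 - r^2)(1 - r^m), then for all |z| = r: |f(z^m)|^p + Σ_{n≥1} |a_{2n-1}| r^{2n-1} ≤ 1. -/
/-!
Schwarz–Pick at the origin, for `f` from the disk to the closed disk, gives
`|f w| ≤ (|a₀| + |w|) / (1 + |a₀| |w|)`. Applied to the average of `f` over the `n`-th roots of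
unity, which is the power series `∑ₖ a_{nk} wᵏ` in `w = zⁿ`, it gives Wiener's inequality
`|aₙ| ≤ 1 - |a₀|²` for `n ≥ 1`, so the odd part of the majorant series is at most
`(1 - |a₀|²) r / (1 - r²)`. With Bernoulli's inequality `xᵖ ≤ 1 - p (1 - x)` and `ρ = rᵐ`, the
claim reduces to `(1 - |a₀|²) r / (1 - r²) ≤ p (1 - |a₀|) (1 - ρ) / (1 + |a₀| ρ)`, which follows
from `(1 + |a₀|) (1 + |a₀| ρ) ≤ 2 (1 + ρ)` and the hypothesis on `r`.

Schwarz–Pick is proved for self-maps of the open disk by composing with the disk automorphism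
`w ↦ (w - c) / (1 - c̄ w)`, and extends to `|f| ≤ 1` by applying it to `t f` and letting `t → 1`.
-/

open Metric Set Complex ComplexConjugate FormalMultilinearSeries

noncomputable def diskMobius (c w : ℂ) : ℂ := (w - c) / (1 - conj c * w)

lemma sq_norm_one_sub_conj_mul_sub_sq_norm_sub (c w : ℂ) :
    ‖1 - conj c * w‖ ^ 2 - ‖w - c‖ ^ 2 = (1 - ‖c‖ ^ 2) * (1 - ‖w‖ ^ 2) := by
  simp only [Complex.sq_norm, normSq_apply, sub_re, sub_im, mul_re, mul_im, conj_re, conj_im,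
    one_re, one_im]
  ring

lemma one_sub_norm_mul_norm_pos {c w : ℂ} (hc : ‖c‖ < 1) (hw : ‖w‖ < 1) :
    0 < 1 - ‖c‖ * ‖w‖ := by
  nlinarith [norm_nonneg c, norm_nonneg w]

lemma one_sub_norm_mul_norm_le_norm_one_sub_conj_mul (c w : ℂ) :
    1 - ‖c‖ * ‖w‖ ≤ ‖1 - conj c * w‖ := by
  simpa [norm_mul] using norm_sub_norm_le (1 : ℂ) (conj c * w)

lemma norm_diskMobius_lt_one {c w : ℂ} (hc : ‖c‖ < 1) (hw : ‖w‖ < 1) :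
    ‖diskMobius c w‖ < 1 := by
  have hB := (one_sub_norm_mul_norm_pos hc hw).trans_le
    (one_sub_norm_mul_norm_le_norm_one_sub_conj_mul c w)
  have hid := sq_norm_one_sub_conj_mul_sub_sq_norm_sub c w
  rw [diskMobius, norm_div, div_lt_one hB]
  refine lt_of_pow_lt_pow_left₀ 2 hB.le ?_
  nlinarith [norm_nonneg c, norm_nonneg w, mul_pos (sub_pos.2 hc) (sub_pos.2 hw)]

lemma norm_sub_norm_le_norm_diskMobius_mul {c w : ℂ} (hc : ‖c‖ < 1) (hw : ‖w‖ < 1) :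
    ‖w‖ - ‖c‖ ≤ ‖diskMobius c w‖ * (1 - ‖c‖ * ‖w‖) := by
  have hpos := one_sub_norm_mul_norm_pos hc hw
  have hle := one_sub_norm_mul_norm_le_norm_one_sub_conj_mul c w
  have hB := hpos.trans_le hle
  have hid := sq_norm_one_sub_conj_mul_sub_sq_norm_sub c w
  rw [diskMobius, norm_div, div_mul_eq_mul_div, le_div_iff₀ hB]
  refine le_of_pow_le_pow_left₀ two_ne_zero (by positivity) ?_
  -- By `(1 - ‖c‖‖w‖)² - (‖w‖ - ‖c‖)² = (1 - ‖c‖²)(1 - ‖w‖²)` and `hid`, the squares differ by: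
  have hgap : 0 ≤ (1 - ‖c‖ ^ 2) * (1 - ‖w‖ ^ 2) *
      (‖1 - conj c * w‖ ^ 2 - (1 - ‖c‖ * ‖w‖) ^ 2) := by
    refine mul_nonneg (mul_nonneg ?_ ?_) (sub_nonneg.2 (pow_le_pow_left₀ hpos.le hle 2)) <;>
      nlinarith [norm_nonneg c, norm_nonneg w]
  linear_combination hgap + (1 - ‖c‖ * ‖w‖) ^ 2 * hid

lemma hasDerivAt_diskMobius_self {c : ℂ} (hc : ‖c‖ < 1) :
    HasDerivAt (diskMobius c) ((1 - ‖c‖ ^ 2 : ℝ) : ℂ)⁻¹ c := by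
  have hden : (1 : ℂ) - conj c * c ≠ 0 := by
    rw [conj_mul', ← ofReal_pow, ← ofReal_one, ← ofReal_sub, ofReal_ne_zero]
    nlinarith [norm_nonneg c]
  have h : HasDerivAt (diskMobius c) _ c := ((hasDerivAt_id' c).sub_const c).div
    (((hasDerivAt_id' c).const_mul (conj c)).const_sub 1) hden
  refine h.congr_deriv ?_
  rw [sub_self, zero_mul, sub_zero, one_mul, sq, div_mul_cancel_right₀ hden, conj_mul']
  push_cast
  rfl

lemma mapsTo_diskMobius {c : ℂ} (hc : ‖c‖ < 1) :
    MapsTo (diskMobius c) (ball 0 1) (ball 0 1) := fun _ hw ↦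
  mem_ball_zero_iff.2 (norm_diskMobius_lt_one hc (mem_ball_zero_iff.1 hw))

lemma differentiableOn_diskMobius {c : ℂ} (hc : ‖c‖ < 1) :
    DifferentiableOn ℂ (diskMobius c) (ball 0 1) := fun w hw ↦ by
  have hden : (1 : ℂ) - conj c * w ≠ 0 := norm_pos_iff.1 <|
    (one_sub_norm_mul_norm_pos hc (mem_ball_zero_iff.1 hw)).trans_le
      (one_sub_norm_mul_norm_le_norm_one_sub_conj_mul c w)
  exact ((differentiableAt_id.sub_const c).div
    ((differentiableAt_id.const_mul _).const_sub 1) hden).differentiableWithinAt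

theorem norm_mul_one_add_le_of_mapsTo_ball {f : ℂ → ℂ} (hf : DifferentiableOn ℂ f (ball 0 1))
    (hmaps : MapsTo f (ball 0 1) (ball 0 1)) {w : ℂ} (hw : w ∈ ball 0 1) :
    ‖f w‖ * (1 + ‖f 0‖ * ‖w‖) ≤ ‖f 0‖ + ‖w‖ := by
  have hc : ‖f 0‖ < 1 := mem_ball_zero_iff.1 (hmaps (mem_ball_self one_pos))
  have hfw : ‖f w‖ < 1 := mem_ball_zero_iff.1 (hmaps hw)
  have hschwarz : ‖diskMobius (f 0) (f w)‖ ≤ ‖w‖ :=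
    Complex.norm_le_norm_of_mapsTo_ball ((differentiableOn_diskMobius hc).comp hf hmaps)
      (((mapsTo_diskMobius hc).comp hmaps).mono_right ball_subset_closedBall)
      (by simp [diskMobius]) (mem_ball_zero_iff.1 hw)
  have hpick := norm_sub_norm_le_norm_diskMobius_mul hc hfw
  have hfactor : 0 ≤ 1 - ‖f 0‖ * ‖f w‖ := by nlinarith [norm_nonneg w, norm_nonneg (f 0)]
  nlinarith [mul_le_mul_of_nonneg_right hschwarz hfactor]

theorem norm_deriv_le_one_sub_sq_of_mapsTo_ball {f : ℂ → ℂ} (hf : DifferentiableOn ℂ f (ball 0 1))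
    (hmaps : MapsTo f (ball 0 1) (ball 0 1)) :
    ‖deriv f 0‖ ≤ 1 - ‖f 0‖ ^ 2 := by
  have hc : ‖f 0‖ < 1 := mem_ball_zero_iff.1 (hmaps (mem_ball_self one_pos))
  have hpos : 0 < 1 - ‖f 0‖ ^ 2 := by nlinarith [norm_nonneg (f 0)]
  have hderiv := (hasDerivAt_diskMobius_self hc).comp 0
    (hf.differentiableAt (ball_mem_nhds 0 one_pos)).hasDerivAt
  have hmaps' : MapsTo (diskMobius (f 0) ∘ f) (ball 0 1) (closedBall 0 1) :=
    ((mapsTo_diskMobius hc).comp hmaps).mono_right ball_subset_closedBall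
  have hschwarz := Complex.norm_deriv_le_one_of_mapsTo_ball
    ((differentiableOn_diskMobius hc).comp hf hmaps) (by simpa [diskMobius] using hmaps') one_pos
  rwa [hderiv.deriv, norm_mul, norm_inv, norm_real, Real.norm_of_nonneg hpos.le,
    inv_mul_le_iff₀ hpos, mul_one] at hschwarz

lemma IsPrimitiveRoot.sum_range_pow_pow_eq_ite {K : Type*} [Field K] {ζ : K} {n : ℕ}
    (hζ : IsPrimitiveRoot ζ n) (k : ℕ) :
    ∑ j ∈ Finset.range n, (ζ ^ k) ^ j = if n ∣ k then (n : K) else 0 := by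
  split_ifs with hdvd
  · simp [(hζ.pow_eq_one_iff_dvd k).2 hdvd]
  · have hne : ζ ^ k ≠ 1 := mt (hζ.pow_eq_one_iff_dvd k).1 hdvd
    rw [geom_sum_eq hne, ← pow_mul, mul_comm, pow_mul, hζ.pow_eq_one, one_pow, sub_self,
      zero_div]

theorem IsPrimitiveRoot.hasSum_mul_pow_section {K : Type*} [Field K] [CharZero K]
    [TopologicalSpace K] [IsTopologicalRing K] {ζ : K} {n : ℕ} (hζ : IsPrimitiveRoot ζ n)
    (hn : 0 < n) {a s : ℕ → K} {z : K}
    (h : ∀ j ∈ Finset.range n, HasSum (fun k ↦ a k * (ζ ^ j * z) ^ k) (s j)) :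
    HasSum (fun k ↦ a (n * k) * (z ^ n) ^ k) ((n : K)⁻¹ * ∑ j ∈ Finset.range n, s j) := by
  have hterm (k : ℕ) : ∑ j ∈ Finset.range n, a k * (ζ ^ j * z) ^ k
      = if n ∣ k then n * (a k * z ^ k) else 0 := by
    have (j : ℕ) : a k * (ζ ^ j * z) ^ k = a k * z ^ k * (ζ ^ k) ^ j := by ring
    rw [Finset.sum_congr rfl fun j _ ↦ this j, ← Finset.mul_sum, hζ.sum_range_pow_pow_eq_ite]
    split_ifs <;> ring
  have hfilter := hasSum_sum h
  simp_rw [hterm] at hfilter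
  have hsection := ((mul_right_injective₀ hn.ne').hasSum_iff ?_).2 hfilter
  · have hcoeff (k : ℕ) : (n : K)⁻¹ * (if n ∣ n * k then n * (a (n * k) * z ^ (n * k)) else 0)
        = a (n * k) * (z ^ n) ^ k := by
      rw [if_pos (dvd_mul_right n k), inv_mul_cancel_left₀ (Nat.cast_ne_zero.2 hn.ne'), pow_mul]
    simpa only [Function.comp_def, hcoeff] using hsection.mul_left (n : K)⁻¹
  · rintro k hk
    rw [if_neg]
    rintro ⟨l, rfl⟩
    exact hk ⟨l, rfl⟩

lemma eball_zero_one : eball (0 : ℂ) 1 = ball 0 1 := by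
  simpa using eball_coe (x := (0 : ℂ)) (ε := 1)

lemma one_le_radius_ofScalars {a : ℕ → ℂ}
    (ha : ∀ z ∈ ball (0 : ℂ) 1, Summable fun n ↦ a n * z ^ n) :
    1 ≤ (ofScalars ℂ a).radius := by
  refine ENNReal.le_of_forall_nnreal_lt fun r hr ↦ ?_
  have hr1 : (r : ℝ) < 1 := by exact_mod_cast hr
  have hs := ha r (by simpa using hr1)
  refine (ofScalars ℂ a).le_radius_of_tendsto (l := 0) ?_
  simpa [ofScalars_norm] using hs.tendsto_atTop_zero.norm

lemma hasFPowerSeriesOnBall_ofScalarsSum {a : ℕ → ℂ}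
    (ha : ∀ z ∈ ball (0 : ℂ) 1, Summable fun n ↦ a n * z ^ n) :
    HasFPowerSeriesOnBall (ofScalarsSum a) (ofScalars ℂ a) 0 1 :=
  ((ofScalars ℂ a).hasFPowerSeriesOnBall
    (zero_lt_one.trans_le (one_le_radius_ofScalars ha))).mono one_pos (one_le_radius_ofScalars ha)

theorem norm_coeff_one_le_of_forall_hasSum_mem_ball {b : ℕ → ℂ}
    (hb : ∀ w ∈ ball (0 : ℂ) 1, ∃ v ∈ ball (0 : ℂ) 1, HasSum (fun k ↦ b k * w ^ k) v) :
    ‖b 1‖ ≤ 1 - ‖b 0‖ ^ 2 := by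
  have hps := hasFPowerSeriesOnBall_ofScalarsSum fun w hw ↦
    (hb w hw).choose_spec.2.summable
  have hmaps : MapsTo (ofScalarsSum b) (ball (0 : ℂ) 1) (ball 0 1) := fun w hw ↦ by
    obtain ⟨v, hv, hsum⟩ := hb w hw
    rwa [ofScalars_sum_eq, tsum_congr fun n ↦ smul_eq_mul .., hsum.tsum_eq]
  have hdiff := hps.differentiableOn
  rw [eball_zero_one] at hdiff
  simpa [hps.hasFPowerSeriesAt.deriv, ofScalars_apply_eq, ofScalarsSum_zero] using
    norm_deriv_le_one_sub_sq_of_mapsTo_ball hdiff hmaps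

lemma exists_pow_eq_of_mem_ball {n : ℕ} (hn : n ≠ 0) {w : ℂ} (hw : w ∈ ball (0 : ℂ) 1) :
    ∃ z ∈ ball (0 : ℂ) 1, z ^ n = w := by
  refine ⟨w ^ (n⁻¹ : ℂ), ?_, cpow_nat_inv_pow w hn⟩
  rw [mem_ball_zero_iff, norm_cpow_inv_nat]
  exact Real.rpow_lt_one (norm_nonneg w) (mem_ball_zero_iff.1 hw) (by positivity)

theorem norm_coeff_le_one_sub_sq_of_mapsTo_ball {f : ℂ → ℂ} {a : ℕ → ℂ}
    (hsum : ∀ z ∈ ball (0 : ℂ) 1, HasSum (fun k ↦ a k * z ^ k) (f z))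
    (hmaps : MapsTo f (ball 0 1) (ball 0 1)) {n : ℕ} (hn : 0 < n) :
    ‖a n‖ ≤ 1 - ‖a 0‖ ^ 2 := by
  obtain ⟨ζ, hζ⟩ : ∃ ζ : ℂ, IsPrimitiveRoot ζ n := ⟨_, isPrimitiveRoot_exp n hn.ne'⟩
  have hrot (j : ℕ) {z : ℂ} (hz : z ∈ ball (0 : ℂ) 1) : ζ ^ j * z ∈ ball (0 : ℂ) 1 := by
    simpa [norm_mul, norm_pow, hζ.norm'_eq_one hn.ne'] using hz
  have hsection (w : ℂ) (hw : w ∈ ball (0 : ℂ) 1) :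
      ∃ v ∈ ball (0 : ℂ) 1, HasSum (fun k ↦ a (n * k) * w ^ k) v := by
    obtain ⟨z, hz, rfl⟩ := exists_pow_eq_of_mem_ball hn.ne' hw
    refine ⟨_, ?_, hζ.hasSum_mul_pow_section hn fun j _ ↦ hsum _ (hrot j hz)⟩
    have hmean := (convex_ball (0 : ℂ) 1).sum_mem (t := Finset.range n)
      (w := fun _ ↦ (n : ℝ)⁻¹) (fun _ _ ↦ by positivity) (by simp [hn.ne'])
      fun j _ ↦ hmaps (hrot j hz)
    simpa [← Finset.mul_sum, Complex.real_smul] using hmean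
  simpa using norm_coeff_one_le_of_forall_hasSum_mem_ball hsection

lemma le_at_one_of_forall_mem_Ioo {u v : ℝ → ℝ} (hu : Continuous u) (hv : Continuous v)
    (h : ∀ t ∈ Ioo (0 : ℝ) 1, u t ≤ v t) : u 1 ≤ v 1 :=
  (isClosed_le hu hv).closure_subset_iff.2 h
    (by rw [closure_Ioo zero_ne_one]; exact right_mem_Icc.2 zero_le_one)

lemma mapsTo_ball_const_mul {f : ℂ → ℂ} (hb : ∀ z ∈ ball (0 : ℂ) 1, ‖f z‖ ≤ 1) {t : ℝ}
    (ht : t ∈ Ioo (0 : ℝ) 1) : MapsTo (fun z ↦ (t : ℂ) * f z) (ball 0 1) (ball 0 1) :=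
  fun z hz ↦ by
    rw [mem_ball_zero_iff, norm_mul, norm_real, Real.norm_of_nonneg ht.1.le]
    nlinarith [hb z hz, norm_nonneg (f z), ht.1, ht.2]

theorem norm_coeff_le_one_sub_sq_of_norm_le_one {f : ℂ → ℂ} {a : ℕ → ℂ}
    (hsum : ∀ z ∈ ball (0 : ℂ) 1, HasSum (fun k ↦ a k * z ^ k) (f z))
    (hb : ∀ z ∈ ball (0 : ℂ) 1, ‖f z‖ ≤ 1) {n : ℕ} (hn : 0 < n) :
    ‖a n‖ ≤ 1 - ‖a 0‖ ^ 2 := by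
  have hscaled (t : ℝ) (ht : t ∈ Ioo (0 : ℝ) 1) : t * ‖a n‖ ≤ 1 - t ^ 2 * ‖a 0‖ ^ 2 := by
    have hsum' (z : ℂ) (hz : z ∈ ball (0 : ℂ) 1) :
        HasSum (fun k ↦ (t : ℂ) * a k * z ^ k) ((t : ℂ) * f z) := by
      simpa only [mul_assoc] using (hsum z hz).mul_left (t : ℂ)
    simpa [norm_mul, mul_pow, abs_of_pos ht.1] using
      norm_coeff_le_one_sub_sq_of_mapsTo_ball hsum' (mapsTo_ball_const_mul hb ht) hn
  simpa using le_at_one_of_forall_mem_Ioo (by fun_prop) (by fun_prop) hscaled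

theorem norm_mul_one_add_le_of_norm_le_one {f : ℂ → ℂ} (hf : DifferentiableOn ℂ f (ball 0 1))
    (hb : ∀ z ∈ ball (0 : ℂ) 1, ‖f z‖ ≤ 1) {w : ℂ} (hw : w ∈ ball (0 : ℂ) 1) :
    ‖f w‖ * (1 + ‖f 0‖ * ‖w‖) ≤ ‖f 0‖ + ‖w‖ := by
  have hscaled (t : ℝ) (ht : t ∈ Ioo (0 : ℝ) 1) :
      t * ‖f w‖ * (1 + t * ‖f 0‖ * ‖w‖) ≤ t * ‖f 0‖ + ‖w‖ := by
    simpa [norm_mul, abs_of_pos ht.1, mul_assoc] using norm_mul_one_add_le_of_mapsTo_ball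
      ((differentiableOn_const _).mul hf) (mapsTo_ball_const_mul hb ht) hw
  simpa using le_at_one_of_forall_mem_Ioo (by fun_prop) (by fun_prop) hscaled

lemma hasSum_pow_two_mul_add_one {r : ℝ} (hr0 : 0 ≤ r) (hr1 : r < 1) :
    HasSum (fun k : ℕ ↦ r ^ (2 * k + 1)) (r / (1 - r ^ 2)) := by
  have hgeo := (hasSum_geometric_of_lt_one (sq_nonneg r) (by nlinarith)).mul_left r
  rw [← div_eq_mul_inv] at hgeo
  exact hgeo.congr_fun fun k ↦ by ring

lemma tsum_mul_pow_two_mul_add_one_le {c : ℕ → ℝ} {C r : ℝ} (hc0 : ∀ k, 0 ≤ c k)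
    (hcC : ∀ k, c k ≤ C) (hr0 : 0 ≤ r) (hr1 : r < 1) :
    ∑' k, c k * r ^ (2 * k + 1) ≤ C * (r / (1 - r ^ 2)) := by
  have hgeo := (hasSum_pow_two_mul_add_one hr0 hr1).mul_left C
  have hle (k : ℕ) : c k * r ^ (2 * k + 1) ≤ C * r ^ (2 * k + 1) :=
    mul_le_mul_of_nonneg_right (hcC k) (by positivity)
  exact hasSum_le hle
    (hgeo.summable.of_nonneg_of_le (fun k ↦ by have := hc0 k; positivity) hle).hasSum hgeo

lemma one_sub_sq_mul_div_le_mul_one_sub {α β ρ r p : ℝ} (hα0 : 0 ≤ α) (hα1 : α ≤ 1)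
    (hρ : 0 ≤ ρ) (hβ : β * (1 + α * ρ) ≤ α + ρ) (hr0 : 0 ≤ r) (hr1 : r < 1) (hp : 0 ≤ p)
    (hcond : 2 * r * (1 + ρ) ≤ p * (1 - r ^ 2) * (1 - ρ)) :
    (1 - α ^ 2) * (r / (1 - r ^ 2)) ≤ p * (1 - β) := by
  have hr2 : 0 < 1 - r ^ 2 := by nlinarith
  have hden : 0 < 1 + α * ρ := by positivity
  rw [← mul_div_assoc, div_le_iff₀ hr2]
  refine le_of_mul_le_mul_right ?_ hden
  have hβ' : (1 - α) * (1 - ρ) ≤ (1 - β) * (1 + α * ρ) := by linarith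
  have hα' : (1 + α) * (1 + α * ρ) ≤ 2 * (1 + ρ) := by nlinarith
  calc (1 - α ^ 2) * r * (1 + α * ρ) = (1 - α) * ((1 + α) * (1 + α * ρ) * r) := by ring
    _ ≤ (1 - α) * (2 * (1 + ρ) * r) := by gcongr
    _ = (1 - α) * (2 * r * (1 + ρ)) := by ring
    _ ≤ (1 - α) * (p * (1 - r ^ 2) * (1 - ρ)) := by gcongr
    _ = p * (1 - r ^ 2) * ((1 - α) * (1 - ρ)) := by ring
    _ ≤ p * (1 - r ^ 2) * ((1 - β) * (1 + α * ρ)) := by gcongr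
    _ = p * (1 - β) * (1 - r ^ 2) * (1 + α * ρ) := by ring

lemma hasSum_mul_zero_pow (a : ℕ → ℂ) : HasSum (fun n ↦ a n * 0 ^ n) (a 0) := by
  simpa using hasSum_single (f := fun n ↦ a n * (0 : ℂ) ^ n) 0 fun n hn ↦ by simp [hn]

theorem bohr_rogosinski_odd_coeffs
    (f : ℂ → ℂ) (a : ℕ → ℂ) (p : ℝ) (m : ℕ) (r : ℝ)
    (hf : DifferentiableOn ℂ f (ball (0:ℂ) 1))
    (hb : ∀ z ∈ ball (0:ℂ) 1, ‖f z‖ ≤ 1)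
    (hsum : ∀ z ∈ ball (0:ℂ) 1, HasSum (fun n : ℕ => a n * z ^ n) (f z))
    (hp : p ∈ Set.Ioc (0:ℝ) 1) (hm : 0 < m)
    (hr : r ∈ Set.Ico (0:ℝ) 1)
    (hcond : 2 * r * (1 + r ^ m) ≤ p * (1 - r ^ 2) * (1 - r ^ m)) :
    ∀ z : ℂ, ‖z‖ = r →
      ‖f (z ^ m)‖ ^ p
        + ∑' n : ℕ, ‖a (2 * n + 1)‖ * r ^ (2 * n + 1) ≤ 1 := by
  intro z hz
  obtain ⟨hp0, hp1⟩ := hp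
  obtain ⟨hr0, hr1⟩ := hr
  have hzm : z ^ m ∈ ball (0 : ℂ) 1 := by
    simpa [norm_pow, hz] using pow_lt_one₀ hr0 hr1 hm.ne'
  have hf0 : f 0 = a 0 := (hsum 0 (mem_ball_self one_pos)).unique (hasSum_mul_zero_pow a)
  have ha0 : ‖a 0‖ ≤ 1 := hf0 ▸ hb 0 (mem_ball_self one_pos)
  have hval := norm_mul_one_add_le_of_norm_le_one hf hb hzm
  rw [hf0, norm_pow, hz] at hval
  have htail := tsum_mul_pow_two_mul_add_one_le (c := fun n ↦ ‖a (2 * n + 1)‖)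
    (fun n ↦ norm_nonneg _) (fun n ↦ norm_coeff_le_one_sub_sq_of_norm_le_one hsum hb (by omega))
    hr0 hr1
  have hbern := rpow_one_add_le_one_add_mul_self (s := ‖f (z ^ m)‖ - 1)
    (by linarith [norm_nonneg (f (z ^ m))]) hp0.le hp1
  rw [add_sub_cancel] at hbern
  have hkey := one_sub_sq_mul_div_le_mul_one_sub (norm_nonneg (a 0)) ha0 (by positivity) hval
    hr0 hr1 hp0.le hcond
  linarith
end

section
/- Let (λ_k)_{k≥1} be nonnegative continuous functions on [0,1) with Σ λ_k(r) locally uniformly convergent, m a positive integer, f a convex univalent analytic function on 𝔻 with Ω = f(𝔻), and g(z) = Σ b_k z^k subordinate to f. If r ∈ [0,1) satisfies Σ_{k≥1} λ_k(r) + r^m/(1-r^m) ≤ 1/2, then for all |z| = r: |g(z^m)| + Σ_{k≥1} |b_k|·λ_k(r) ≤ |f(0)| + dist(f(0), ∂Ω). -/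
/-
Separating a point `c ∉ Ω` from the convex domain `Ω` by a real-linear functional turns `Ω` into a
half-plane; composing with the Möbius map of that half-plane onto the disc, the Schwarz lemma gives
`|φ'(0)| ≤ 2 |φ(0) - c|` for every holomorphic `φ : 𝔻 → Ω` (Carathéodory's inequality).
The `k`-th multisection `Σₙ b_{nk} uⁿ` of `g` is an average of rotations of `g`, so it still maps
`𝔻` into `Ω`, and its derivative at `0` is `b_k`; hence `|b_k| ≤ 2 dist(f(0), ∂Ω)` for `k ≥ 1`.
The boundary is nonempty because an injective holomorphic `f` cannot map `𝔻` onto `ℂ`: its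
inverse would be a bounded entire function (critical values being removable singularities).
Summing the coefficient bound against `rᵐᵏ` and against `λ_k(r)` and using the hypothesis on `r`
gives the inequality.
-/

open Metric Filter Set Complex ComplexConjugate Topology Bornology Function

theorem Complex.norm_deriv_zero_le_two_mul_re_of_re_pos {p : ℂ → ℂ}
    (hp : DifferentiableOn ℂ p (ball 0 1)) (hre : ∀ z ∈ ball (0 : ℂ) 1, 0 < (p z).re) :
    ‖deriv p 0‖ ≤ 2 * (p 0).re := by
  set a := p 0
  have h0 : (0 : ℂ) ∈ ball (0 : ℂ) 1 := mem_ball_self one_pos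
  have ha : 0 < a.re := hre 0 h0
  have hden : ∀ z ∈ ball (0 : ℂ) 1, p z + conj a ≠ 0 := fun z hz h => by
    have := congrArg re h
    simp only [add_re, conj_re, zero_re] at this
    linarith [hre z hz]
  -- the Möbius map of the right half-plane onto the disc sending `a` to `0`
  set H : ℂ → ℂ := fun z => (p z - a) / (p z + conj a)
  have hmaps : MapsTo H (ball 0 1) (closedBall (H 0) 1) := by
    intro z hz
    have hnorm_sq : ‖p z + conj a‖ ^ 2 = ‖p z - a‖ ^ 2 + 4 * (p z).re * a.re := by
      simp only [Complex.sq_norm, normSq_apply, add_re, add_im, sub_re, sub_im, conj_re, conj_im]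
      ring
    have hle : ‖p z - a‖ ≤ ‖p z + conj a‖ :=
      le_of_pow_le_pow_left₀ two_ne_zero (norm_nonneg _) (by nlinarith [hre z hz])
    simpa [H, a, norm_div, div_le_one (norm_pos_iff.2 (hden z hz))] using hle
  have hschwarz : ‖deriv H 0‖ ≤ 1 :=
    norm_deriv_le_one_of_mapsTo_ball ((hp.sub_const a).div (hp.add_const _) hden) hmaps one_pos
  have hp' : HasDerivAt p (deriv p 0) 0 :=
    (hp.differentiableAt (isOpen_ball.mem_nhds h0)).hasDerivAt
  have hH' : HasDerivAt H (deriv p 0 / ((2 * a.re : ℝ) : ℂ)) 0 := by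
    have h := (hp'.sub_const a).div (hp'.add_const (conj a)) (hden 0 h0)
    have h2 : ((2 * a.re : ℝ) : ℂ) ≠ 0 := by exact_mod_cast (mul_pos two_pos ha).ne'
    rwa [sub_self, zero_mul, sub_zero, add_conj, sq, mul_div_mul_right _ _ h2] at h
  rwa [hH'.deriv, norm_div, norm_real, Real.norm_of_nonneg (by positivity),
    div_le_one (by positivity)] at hschwarz

theorem Complex.norm_deriv_zero_le_two_mul_dist_of_mapsTo_convex {Ω : Set ℂ} (hΩ : Convex ℝ Ω)
    (hΩo : IsOpen Ω) {φ : ℂ → ℂ} (hφ : DifferentiableOn ℂ φ (ball 0 1))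
    (hmaps : MapsTo φ (ball 0 1) Ω) {c : ℂ} (hc : c ∉ Ω) :
    ‖deriv φ 0‖ ≤ 2 * dist (φ 0) c := by
  have h0 : (0 : ℂ) ∈ ball (0 : ℂ) 1 := mem_ball_self one_pos
  obtain ⟨l, hl⟩ := RCLike.geometric_hahn_banach_open_point (𝕜 := ℂ) hΩ hΩo hc
  have hl_eq : ∀ z, l z = l 1 * z := fun z => by simpa [mul_comm] using l.map_smul z 1
  set p : ℂ → ℂ := fun z => l 1 * (c - φ z)
  have hre : ∀ z ∈ ball (0 : ℂ) 1, 0 < (p z).re := fun z hz => by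
    have := hl _ (hmaps hz)
    rw [hl_eq (φ z), hl_eq c, RCLike.re_to_complex, RCLike.re_to_complex] at this
    simp only [p, mul_sub, sub_re]
    linarith
  have hl1 : 0 < ‖l 1‖ := norm_pos_iff.2 fun h => by simpa [p, h] using hre 0 h0
  have hφ' : HasDerivAt φ (deriv φ 0) 0 :=
    (hφ.differentiableAt (isOpen_ball.mem_nhds h0)).hasDerivAt
  have hcar := norm_deriv_zero_le_two_mul_re_of_re_pos ((hφ.const_sub c).const_mul (l 1)) hre
  rw [((hφ'.const_sub c).const_mul (l 1)).deriv] at hcar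
  have : ‖l 1‖ * ‖deriv φ 0‖ ≤ ‖l 1‖ * (2 * dist (φ 0) c) :=
    calc ‖l 1‖ * ‖deriv φ 0‖ = ‖l 1 * -deriv φ 0‖ := by rw [norm_mul, norm_neg]
      _ ≤ 2 * (p 0).re := hcar
      _ ≤ 2 * ‖p 0‖ := by gcongr; exact re_le_norm _
      _ = ‖l 1‖ * (2 * dist (φ 0) c) := by
        rw [norm_mul, dist_comm, dist_eq_norm]; ring
  exact le_of_mul_le_mul_left this hl1

theorem one_le_ofScalars_radius_of_summable {c : ℕ → ℂ}
    (hc : ∀ z ∈ ball (0 : ℂ) 1, Summable fun n => c n * z ^ n) :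
    1 ≤ (FormalMultilinearSeries.ofScalars ℂ c).radius := by
  refine ENNReal.le_of_forall_nnreal_lt fun ρ hρ => ?_
  have hmem : ((ρ : ℝ) : ℂ) ∈ ball (0 : ℂ) 1 := by
    simpa [abs_of_nonneg ρ.coe_nonneg] using hρ
  refine (FormalMultilinearSeries.ofScalars ℂ c).le_radius_of_tendsto (l := 0) ?_
  simpa [FormalMultilinearSeries.ofScalars_norm, abs_of_nonneg ρ.coe_nonneg]
    using (hc _ hmem).tendsto_atTop_zero.norm

theorem IsPrimitiveRoot.sum_pow_pow_eq_ite {K : Type*} [Field K] {ε : K} {k : ℕ}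
    (hε : IsPrimitiveRoot ε k) (n : ℕ) :
    ∑ j ∈ Finset.range k, (ε ^ j) ^ n = if k ∣ n then (k : K) else 0 := by
  simp_rw [← pow_mul, mul_comm _ n, pow_mul]
  split_ifs with h
  · simp [(hε.pow_eq_one_iff_dvd n).2 h]
  · have hne : ε ^ n ≠ 1 := fun h' => h ((hε.pow_eq_one_iff_dvd n).1 h')
    rw [geom_sum_eq hne, ← pow_mul, mul_comm, pow_mul, hε.pow_eq_one, one_pow, sub_self,
      zero_div]

theorem hasSum_comp_mul_of_isPrimitiveRoot {b : ℕ → ℂ} {g : ℂ → ℂ} {ε ζ : ℂ} {k : ℕ}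
    (hε : IsPrimitiveRoot ε k) (hk : 0 < k)
    (hg : ∀ j, HasSum (fun n => b n * (ε ^ j * ζ) ^ n) (g (ε ^ j * ζ))) :
    HasSum (fun n => b (n * k) * (ζ ^ k) ^ n)
      ((k : ℂ)⁻¹ * ∑ j ∈ Finset.range k, g (ε ^ j * ζ)) := by
  have hk' : (k : ℂ) ≠ 0 := by exact_mod_cast hk.ne'
  have h := (hasSum_sum (s := Finset.range k) fun j _ => hg j).mul_left (k : ℂ)⁻¹
  have hterm : ∀ n, (k : ℂ)⁻¹ * ∑ j ∈ Finset.range k, b n * (ε ^ j * ζ) ^ n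
      = if k ∣ n then b n * ζ ^ n else 0 := fun n => by
    simp_rw [mul_pow, ← mul_assoc, mul_comm (b n), mul_assoc, ← Finset.sum_mul,
      hε.sum_pow_pow_eq_ite]
    split_ifs
    · field_simp
    · simp
  simp_rw [hterm] at h
  rw [← (mul_left_injective₀ hk.ne').hasSum_iff] at h
  · simpa [Function.comp_def, ← pow_mul, mul_comm k] using h
  · rintro n hn
    rw [if_neg]
    rintro ⟨m, rfl⟩
    exact hn ⟨m, mul_comm m k⟩

theorem exists_hasSum_comp_mul_mem_of_mapsTo_convex {Ω : Set ℂ} (hΩ : Convex ℝ Ω)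
    {g : ℂ → ℂ} {b : ℕ → ℂ} (hsum : ∀ z ∈ ball (0 : ℂ) 1, HasSum (fun n => b n * z ^ n) (g z))
    (hmaps : MapsTo g (ball 0 1) Ω) {k : ℕ} (hk : 0 < k) {u : ℂ} (hu : u ∈ ball (0 : ℂ) 1) :
    ∃ s ∈ Ω, HasSum (fun n => b (n * k) * u ^ n) s := by
  obtain ⟨ζ, rfl⟩ := IsAlgClosed.exists_pow_nat_eq u hk
  obtain ⟨ε, hε⟩ : ∃ ε : ℂ, IsPrimitiveRoot ε k := ⟨_, isPrimitiveRoot_exp k hk.ne'⟩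
  have hmem : ∀ j : ℕ, ε ^ j * ζ ∈ ball (0 : ℂ) 1 := fun j => by
    rw [mem_ball_zero_iff, norm_pow, pow_lt_one_iff_of_nonneg (norm_nonneg _) hk.ne'] at hu
    simpa [norm_mul, norm_pow, hε.norm'_eq_one hk.ne'] using hu
  refine ⟨_, ?_, hasSum_comp_mul_of_isPrimitiveRoot hε hk fun j => hsum _ (hmem j)⟩
  have hk' : (k : ℝ) ≠ 0 := by exact_mod_cast hk.ne'
  convert hΩ.sum_mem (t := Finset.range k) (w := fun _ => (k : ℝ)⁻¹) (by simp)
    (by simp [hk']) fun j _ => hmaps (hmem j) using 1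
  simp [Finset.mul_sum, Complex.real_smul]

theorem norm_coeff_le_two_mul_dist_of_mapsTo_convex {Ω : Set ℂ} (hΩ : Convex ℝ Ω)
    (hΩo : IsOpen Ω) {g : ℂ → ℂ} {b : ℕ → ℂ}
    (hsum : ∀ z ∈ ball (0 : ℂ) 1, HasSum (fun n => b n * z ^ n) (g z))
    (hmaps : MapsTo g (ball 0 1) Ω) {c : ℂ} (hc : c ∉ Ω) {k : ℕ} (hk : 0 < k) :
    ‖b k‖ ≤ 2 * dist (b 0) c := by
  set p := FormalMultilinearSeries.ofScalars ℂ fun n => b (n * k)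
  have hsec := fun u (hu : u ∈ ball (0 : ℂ) 1) =>
    exists_hasSum_comp_mul_mem_of_mapsTo_convex hΩ hsum hmaps hk hu
  have hrad : 1 ≤ p.radius :=
    one_le_ofScalars_radius_of_summable fun u hu => by
      obtain ⟨_, _, hs⟩ := hsec u hu
      exact hs.summable
  have hp := p.hasFPowerSeriesOnBall (one_pos.trans_le hrad)
  have hball : ball (0 : ℂ) 1 ⊆ eball 0 p.radius := fun u hu => by
    refine lt_of_lt_of_le ?_ hrad
    simpa [edist_zero_right, enorm_eq_nnnorm, ← ENNReal.coe_one, ← NNReal.coe_lt_coe] using hu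
  have hmapsp : MapsTo p.sum (ball 0 1) Ω := fun u hu => by
    obtain ⟨s, hs, hsum_s⟩ := hsec u hu
    have := p.hasSum (hball hu)
    simp only [p, FormalMultilinearSeries.ofScalars_apply_eq, smul_eq_mul] at this
    rwa [this.unique hsum_s]
  have := Complex.norm_deriv_zero_le_two_mul_dist_of_mapsTo_convex hΩ hΩo
    (hp.differentiableOn.mono hball) hmapsp hc
  rw [hp.hasFPowerSeriesAt.deriv, ← hp.coeff_zero (fun _ => 0)] at this
  simpa [p, FormalMultilinearSeries.ofScalars_apply_eq] using this

theorem not_eventually_eq_of_injOn {X Y : Type*} [TopologicalSpace X] {f : X → Y} {U : Set X}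
    {x : X} [(𝓝[≠] x).NeBot] (hU : U ∈ 𝓝 x) (hinj : InjOn f U) :
    ¬∀ᶠ z in 𝓝 x, f z = f x := fun h => by
  obtain ⟨z, ⟨hfz, hzU⟩, hzx⟩ :=
    ((h.and hU).filter_mono nhdsWithin_le_nhds |>.and (self_mem_nhdsWithin (s := {x}ᶜ))).exists
  exact hzx (hinj hzU (mem_of_mem_nhds hU) hfz)

section InjOnHolomorphic

variable {U : Set ℂ} {f : ℂ → ℂ} {x : ℂ}

theorem nhds_le_map_nhds_of_injOn (hU : IsOpen U) (hf : DifferentiableOn ℂ f U)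
    (hinj : InjOn f U) (hx : x ∈ U) : 𝓝 (f x) ≤ map f (𝓝 x) :=
  ((hf.analyticAt (hU.mem_nhds hx)).eventually_constant_or_nhds_le_map_nhds).resolve_left
    (not_eventually_eq_of_injOn (hU.mem_nhds hx) hinj)

theorem isOpen_image_of_injOn (hU : IsOpen U) (hf : DifferentiableOn ℂ f U)
    (hinj : InjOn f U) : IsOpen (f '' U) := by
  refine isOpen_iff_mem_nhds.2 ?_
  rintro _ ⟨x, hx, rfl⟩
  exact nhds_le_map_nhds_of_injOn hU hf hinj hx (image_mem_map (hU.mem_nhds hx))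

theorem eventually_deriv_ne_zero_of_injOn (hU : IsOpen U) (hf : DifferentiableOn ℂ f U)
    (hinj : InjOn f U) (hx : x ∈ U) : ∀ᶠ z in 𝓝[≠] x, deriv f z ≠ 0 := by
  refine ((hf.analyticOnNhd hU).deriv x hx).eventually_eq_zero_or_eventually_ne_zero.resolve_left
    fun h => ?_
  obtain ⟨ε, hε, hball⟩ := Metric.mem_nhds_iff.1 (h.and (hU.mem_nhds hx))
  refine not_eventually_eq_of_injOn (hU.mem_nhds hx) hinj
    (Filter.mem_of_superset (ball_mem_nhds x hε) fun z hz => ?_)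
  exact isOpen_ball.is_const_of_deriv_eq_zero (convex_ball x ε).isPreconnected
    (hf.mono fun w hw => (hball hw).2) (fun w hw => (hball hw).1) hz (mem_ball_self hε)

theorem continuousAt_invFunOn_of_injOn (hU : IsOpen U) (hf : DifferentiableOn ℂ f U)
    (hinj : InjOn f U) (hx : x ∈ U) : ContinuousAt (invFunOn f U) (f x) := by
  intro V hV
  rw [hinj.leftInvOn_invFunOn hx] at hV
  have := nhds_le_map_nhds_of_injOn hU hf hinj hx
    (image_mem_map (m := f) (inter_mem hV (hU.mem_nhds hx)))
  refine mem_map.2 (Filter.mem_of_superset this ?_)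
  rintro _ ⟨z, hz, rfl⟩
  simpa [hinj.leftInvOn_invFunOn hz.2] using hz.1

theorem hasStrictDerivAt_invFunOn_of_injOn (hU : IsOpen U) (hf : DifferentiableOn ℂ f U)
    (hinj : InjOn f U) (hx : x ∈ U) (hfx : deriv f x ≠ 0) :
    HasStrictDerivAt (invFunOn f U) (deriv f x)⁻¹ (f x) :=
  (hf.analyticAt (hU.mem_nhds hx)).hasStrictDerivAt.to_local_left_inverse hfx
    (eventually_of_mem (hU.mem_nhds hx) fun _ hz => hinj.leftInvOn_invFunOn hz)

theorem differentiableAt_invFunOn_of_injOn (hU : IsOpen U) (hf : DifferentiableOn ℂ f U)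
    (hinj : InjOn f U) (hx : x ∈ U) : DifferentiableAt ℂ (invFunOn f U) (f x) := by
  have hcont := continuousAt_invFunOn_of_injOn hU hf hinj hx
  have himage : f '' U ∈ 𝓝 (f x) :=
    (isOpen_image_of_injOn hU hf hinj).mem_nhds (mem_image_of_mem f hx)
  have htend : Tendsto (invFunOn f U) (𝓝[≠] (f x)) (𝓝[≠] x) := by
    have hlim := hcont.tendsto
    rw [hinj.leftInvOn_invFunOn hx] at hlim
    refine tendsto_nhdsWithin_of_tendsto_nhds_of_eventually_within _
      (hlim.mono_left nhdsWithin_le_nhds) ?_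
    filter_upwards [nhdsWithin_le_nhds himage, self_mem_nhdsWithin] with w hw hwx hFw
    exact hwx (by rw [← invFunOn_eq hw, mem_singleton_iff.1 hFw]; exact mem_singleton _)
  have hdiff : ∀ᶠ w in 𝓝[≠] (f x), DifferentiableAt ℂ (invFunOn f U) w := by
    filter_upwards [htend.eventually (eventually_deriv_ne_zero_of_injOn hU hf hinj hx),
      nhdsWithin_le_nhds himage] with w hw ⟨z, hz, hzw⟩
    subst hzw
    rw [hinj.leftInvOn_invFunOn hz] at hw
    exact (hasStrictDerivAt_invFunOn_of_injOn hU hf hinj hz hw).hasDerivAt.differentiableAt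
  exact (analyticAt_of_differentiable_on_punctured_nhds_of_continuousAt hdiff hcont).differentiableAt

theorem image_ne_univ_of_injOn (hU : IsOpen U) (hUb : IsBounded U)
    (hf : DifferentiableOn ℂ f U) (hinj : InjOn f U) : f '' U ≠ univ := by
  intro huniv
  have hsurj : ∀ y, y ∈ f '' U := fun y => huniv ▸ mem_univ y
  have hdiff : Differentiable ℂ (invFunOn f U) := fun y => by
    obtain ⟨x, hx, rfl⟩ := hsurj y
    exact differentiableAt_invFunOn_of_injOn hU hf hinj hx
  obtain ⟨c, hc⟩ := hdiff.exists_eq_const_of_bounded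
    (hUb.subset (range_subset_iff.2 fun y => invFunOn_mem (hsurj y)))
  have h01 : f (invFunOn f U 0) = f (invFunOn f U 1) := by rw [hc]; rfl
  simp [invFunOn_eq (hsurj 0), invFunOn_eq (hsurj 1)] at h01

end InjOnHolomorphic

theorem norm_coeff_le_two_mul_infDist_frontier {Ω : Set ℂ} (hΩ : Convex ℝ Ω) (hΩo : IsOpen Ω)
    (hΩu : Ω ≠ univ) {g : ℂ → ℂ} {b : ℕ → ℂ}
    (hsum : ∀ z ∈ ball (0 : ℂ) 1, HasSum (fun n => b n * z ^ n) (g z))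
    (hmaps : MapsTo g (ball 0 1) Ω) {k : ℕ} (hk : 0 < k) :
    ‖b k‖ ≤ 2 * infDist (b 0) (frontier Ω) := by
  have hfr : (frontier Ω).Nonempty :=
    nonempty_frontier_iff.2 ⟨⟨g 0, hmaps (mem_ball_self one_pos)⟩, hΩu⟩
  have := (le_infDist (r := ‖b k‖ / 2) (x := b 0) hfr).2 fun c hc => by
    have hcΩ : c ∉ Ω := (hΩo.frontier_eq ▸ hc).2
    linarith [norm_coeff_le_two_mul_dist_of_mapsTo_convex hΩ hΩo hsum hmaps hcΩ hk]
  linarith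

theorem norm_le_add_mul_div_one_sub_of_norm_coeff_le {b : ℕ → ℂ} {z s : ℂ} {B : ℝ}
    (hsum : HasSum (fun n => b n * z ^ n) s) (hz : ‖z‖ < 1) (hb : ∀ k, 0 < k → ‖b k‖ ≤ B) :
    ‖s‖ ≤ ‖b 0‖ + B * (‖z‖ / (1 - ‖z‖)) := by
  have htail : HasSum (fun n => b (n + 1) * z ^ (n + 1)) (s - b 0) := by
    simpa using (hasSum_nat_add_iff' 1).2 hsum
  have hgeom : HasSum (fun n : ℕ => B * ‖z‖ ^ (n + 1)) (B * (‖z‖ / (1 - ‖z‖))) := by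
    simpa [pow_succ, mul_assoc, div_eq_mul_inv, mul_comm ‖z‖] using
      ((hasSum_geometric_of_lt_one (norm_nonneg z) hz).mul_left (B * ‖z‖))
  have htail_le := htail.norm_le_of_bounded hgeom fun n => by
    rw [norm_mul, norm_pow]
    exact mul_le_mul_of_nonneg_right (hb _ n.succ_pos) (by positivity)
  calc ‖s‖ = ‖b 0 + (s - b 0)‖ := by rw [add_sub_cancel]
    _ ≤ ‖b 0‖ + ‖s - b 0‖ := norm_add_le _ _
    _ ≤ ‖b 0‖ + B * (‖z‖ / (1 - ‖z‖)) := by linarith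

theorem tsum_norm_mul_le_mul {E : Type*} [SeminormedAddCommGroup E] {b : ℕ → E} {w : ℕ → ℝ}
    {L B : ℝ} (hw : HasSum w L) (hw0 : ∀ k, 0 ≤ w k) (hb : ∀ k, ‖b k‖ ≤ B) :
    ∑' k, ‖b k‖ * w k ≤ B * L := by
  have hle : ∀ k, ‖b k‖ * w k ≤ B * w k := fun k => mul_le_mul_of_nonneg_right (hb k) (hw0 k)
  have hsum : Summable fun k => ‖b k‖ * w k :=
    (hw.summable.mul_left B).of_nonneg_of_le (fun k => mul_nonneg (norm_nonneg _) (hw0 k)) hle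
  exact (hsum.tsum_le_tsum hle (hw.summable.mul_left B)).trans_eq
    (by rw [tsum_mul_left, hw.tsum_eq])

theorem generalized_bohr_rogosinski_convex_subordination_general
    (lam : ℕ → ℝ → ℝ) (m : ℕ) (f g w : ℂ → ℂ) (b : ℕ → ℂ) (r : ℝ)
    (hlnonneg : ∀ k, 1 ≤ k → ∀ t ∈ Set.Ico (0:ℝ) 1, 0 ≤ lam k t)
    (hlconv : TendstoLocallyUniformlyOn
      (fun N : ℕ => fun t : ℝ => ∑ k ∈ Finset.range N, lam (k + 1) t)
      (fun t : ℝ => ∑' k : ℕ, lam (k + 1) t) atTop (Set.Ico (0:ℝ) 1))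
    (hm : 0 < m)
    (hf : DifferentiableOn ℂ f (ball (0:ℂ) 1))
    (hinj : Set.InjOn f (ball (0:ℂ) 1))
    (hconvex : Convex ℝ (f '' ball (0:ℂ) 1))
    (hsum : ∀ z ∈ ball (0:ℂ) 1, HasSum (fun k : ℕ => b k * z ^ k) (g z))
    (hwmaps : Set.MapsTo w (ball (0:ℂ) 1) (ball (0:ℂ) 1))
    (hw0 : w 0 = 0)
    (hsub : ∀ z ∈ ball (0:ℂ) 1, g z = f (w z))
    (hr : r ∈ Set.Ico (0:ℝ) 1)
    (hcond : (∑' k : ℕ, lam (k + 1) r) + r ^ m / (1 - r ^ m) ≤ 1 / 2) :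
    ∀ z : ℂ, ‖z‖ = r →
      ‖g (z ^ m)‖ + ∑' k : ℕ, ‖b (k + 1)‖ * lam (k + 1) r
        ≤ ‖f 0‖ + infDist (f 0) (frontier (f '' ball (0:ℂ) 1)) := by
  intro z hz
  set d := infDist (f 0) (frontier (f '' ball (0:ℂ) 1))
  have h0 : (0 : ℂ) ∈ ball (0 : ℂ) 1 := mem_ball_self one_pos
  have hb0 : b 0 = f 0 := by
    have := (hsum 0 h0).unique (hasSum_single 0 fun n hn => by simp [hn])
    simpa [hsub 0 h0, hw0] using this.symm
  have hb : ∀ k, 0 < k → ‖b k‖ ≤ 2 * d := fun k hk => by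
    simpa [hb0] using norm_coeff_le_two_mul_infDist_frontier hconvex
      (isOpen_image_of_injOn isOpen_ball hf hinj)
      (image_ne_univ_of_injOn isOpen_ball isBounded_ball hf hinj) hsum
      (fun x hx => hsub x hx ▸ mem_image_of_mem f (hwmaps hx)) hk
  have hzm : ‖z ^ m‖ = r ^ m := by rw [norm_pow, hz]
  have hq : r ^ m < 1 := pow_lt_one₀ hr.1 hr.2 hm.ne'
  have hgrowth := norm_le_add_mul_div_one_sub_of_norm_coeff_le
    (hsum _ (mem_ball_zero_iff.2 (hzm ▸ hq))) (hzm ▸ hq) hb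
  have hlam : HasSum (fun k => lam (k + 1) r) (∑' k, lam (k + 1) r) :=
    (hasSum_iff_tendsto_nat_of_nonneg (fun k => hlnonneg _ k.succ_pos r hr) _).2
      (hlconv.tendsto_at hr)
  have hweighted := tsum_norm_mul_le_mul hlam (fun k => hlnonneg _ k.succ_pos r hr)
    fun k => hb (k + 1) k.succ_pos
  rw [hzm, hb0] at hgrowth
  calc ‖g (z ^ m)‖ + ∑' k, ‖b (k + 1)‖ * lam (k + 1) r
      ≤ ‖f 0‖ + 2 * d * (r ^ m / (1 - r ^ m)) + 2 * d * ∑' k, lam (k + 1) r :=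
        add_le_add hgrowth hweighted
    _ = ‖f 0‖ + 2 * d * ((∑' k, lam (k + 1) r) + r ^ m / (1 - r ^ m)) := by ring
    _ ≤ ‖f 0‖ + 2 * d * (1 / 2) := by gcongr; exact mul_nonneg two_pos.le infDist_nonneg
    _ = ‖f 0‖ + d := by ring

theorem generalized_bohr_rogosinski_convex_subordination
    (lam : ℕ → ℝ → ℝ) (m : ℕ) (f g w : ℂ → ℂ) (b : ℕ → ℂ) (r : ℝ)
    (hlcont : ∀ k, 1 ≤ k → ContinuousOn (lam k) (Set.Ico (0:ℝ) 1))
    (hlnonneg : ∀ k, 1 ≤ k → ∀ t ∈ Set.Ico (0:ℝ) 1, 0 ≤ lam k t)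
    (hlconv : TendstoLocallyUniformlyOn
      (fun N : ℕ => fun t : ℝ => ∑ k ∈ Finset.range N, lam (k + 1) t)
      (fun t : ℝ => ∑' k : ℕ, lam (k + 1) t) atTop (Set.Ico (0:ℝ) 1))
    (hm : 0 < m)
    (hf : DifferentiableOn ℂ f (ball (0:ℂ) 1))
    (hinj : Set.InjOn f (ball (0:ℂ) 1))
    (hconvex : Convex ℝ (f '' ball (0:ℂ) 1))
    (hg : DifferentiableOn ℂ g (ball (0:ℂ) 1))
    (hsum : ∀ z ∈ ball (0:ℂ) 1, HasSum (fun k : ℕ => b k * z ^ k) (g z))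
    (hw : DifferentiableOn ℂ w (ball (0:ℂ) 1))
    (hwmaps : Set.MapsTo w (ball (0:ℂ) 1) (ball (0:ℂ) 1))
    (hw0 : w 0 = 0)
    (hsub : ∀ z ∈ ball (0:ℂ) 1, g z = f (w z))
    (hr : r ∈ Set.Ico (0:ℝ) 1)
    (hcond : (∑' k : ℕ, lam (k + 1) r) + r ^ m / (1 - r ^ m) ≤ 1 / 2) :
    ∀ z : ℂ, ‖z‖ = r →
      ‖g (z ^ m)‖ + ∑' k : ℕ, ‖b (k + 1)‖ * lam (k + 1) r
        ≤ ‖f 0‖ + infDist (f 0) (frontier (f '' ball (0:ℂ) 1)) :=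
  generalized_bohr_rogosinski_convex_subordination_general lam m f g w b r hlnonneg hlconv hm hf
    hinj hconvex hsum hwmaps hw0 hsub hr hcond
end
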